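/- (Lemma 1, before communication.) For any team communication/control strategy (f,g) and any adversary strategy gᵃ, at every time t and for every realization (c_t,d_t) of (C_t,D_t) with positive probability and every realization (x_{1:t},u_{1:t−1}) of the team's states and actions, the conditional distribution factorizes across agents: P(x_{1:t},u_{1:t−1} | c_t,d_t) = P(x¹_{1:t},u¹_{1:t−1} | c_t,d_t) · P(x²_{1:t},u²_{1:t−1} | c_t,d_t). Moreover, for each i, the factor P(xⁱ_{1:t},uⁱ_{1:t−1} | c_t,d_t) depends only on agent i's strategy (fⁱ,gⁱ), not on the other agent's strategy nor on the adversary's strategy. -/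
import Mathlib


open Finset
open scoped Classical BigOperators

namespace TA

/-- The primitive model of the team-vs-adversary control system (Section II of the paper):
finite horizon `T`, finite global/local state spaces, finite action spaces, independent
initial states, controlled Markovian dynamics given by transition kernels, an erasure
parameter `pe`, an observation kernel `obs` for the adversary's observation `Y_t`,
a stage cost `cost` and a communication cost `commCost`. -/
structure Model where
  T : ℕ
  hT : 0 < T
  X0 : Type
  X1 : Type
  X2 : Type
  U1 : Type
  U2 : Type
  Ua : Type
  Y : Type
  [fX0 : Fintype X0]
  [fX1 : Fintype X1]
  [fX2 : Fintype X2]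
  [fU1 : Fintype U1]
  [fU2 : Fintype U2]
  [fUa : Fintype Ua]
  [fY : Fintype Y]
  [nX0 : Nonempty X0]
  [nX1 : Nonempty X1]
  [nX2 : Nonempty X2]
  [nU1 : Nonempty U1]
  [nU2 : Nonempty U2]
  [nUa : Nonempty Ua]
  [nY : Nonempty Y]
  init0 : X0 → ℝ
  init1 : X1 → ℝ
  init2 : X2 → ℝ
  trans0 : X0 → Ua → X0 → ℝ
  trans1 : X0 → X1 → U1 → X1 → ℝ
  trans2 : X0 → X2 → U2 → X2 → ℝ
  pe : X0 → ℝ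
  obs : Option (X1 × X2) → Bool × Bool → X0 → Y → ℝ
  cost : ℕ → X0 → X1 × X2 → U1 × U2 → Ua → ℝ
  commCost : X0 → X1 × X2 → ℝ
  init0_nonneg : ∀ x, 0 ≤ init0 x
  init1_nonneg : ∀ x, 0 ≤ init1 x
  init2_nonneg : ∀ x, 0 ≤ init2 x
  init0_sum : ∑ x, init0 x = 1
  init1_sum : ∑ x, init1 x = 1
  init2_sum : ∑ x, init2 x = 1
  trans0_nonneg : ∀ x u x', 0 ≤ trans0 x u x'
  trans1_nonneg : ∀ x0 x u x', 0 ≤ trans1 x0 x u x'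
  trans2_nonneg : ∀ x0 x u x', 0 ≤ trans2 x0 x u x'
  trans0_sum : ∀ x u, ∑ x', trans0 x u x' = 1
  trans1_sum : ∀ x0 x u, ∑ x', trans1 x0 x u x' = 1
  trans2_sum : ∀ x0 x u, ∑ x', trans2 x0 x u x' = 1
  pe_nonneg : ∀ x, 0 ≤ pe x
  pe_le_one : ∀ x, pe x ≤ 1
  obs_nonneg : ∀ z m x y, 0 ≤ obs z m x y
  obs_sum : ∀ z m x, ∑ y, obs z m x y = 1

attribute [instance] Model.fX0 Model.fX1 Model.fX2 Model.fU1 Model.fU2 Model.fUa Model.fY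
attribute [instance] Model.nX0 Model.nX1 Model.nX2 Model.nU1 Model.nU2 Model.nUa Model.nY

/-- A full system trajectory over the horizon: global states, local states, communication
decisions, messages over the erasure channel, adversary observations, and all actions. -/
abbrev Traj (M : Model) :=
  (Fin M.T → M.X0) × (Fin M.T → M.X1) × (Fin M.T → M.X2) ×
  (Fin M.T → Bool) × (Fin M.T → Bool) × (Fin M.T → Option (M.X1 × M.X2)) ×
  (Fin M.T → M.Y) × (Fin M.T → M.U1) × (Fin M.T → M.U2) × (Fin M.T → M.Ua)

def idx (M : Model) (t : ℕ) : Fin M.T := if h : t < M.T then ⟨t, h⟩ else ⟨0, M.hT⟩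

variable {M : Model}

def X0v (ω : Traj M) (t : ℕ) : M.X0 := ω.1 (idx M t)
def X1v (ω : Traj M) (t : ℕ) : M.X1 := ω.2.1 (idx M t)
def X2v (ω : Traj M) (t : ℕ) : M.X2 := ω.2.2.1 (idx M t)
def M1v (ω : Traj M) (t : ℕ) : Bool := ω.2.2.2.1 (idx M t)
def M2v (ω : Traj M) (t : ℕ) : Bool := ω.2.2.2.2.1 (idx M t)
def Zv (ω : Traj M) (t : ℕ) : Option (M.X1 × M.X2) := ω.2.2.2.2.2.1 (idx M t)
def Yv (ω : Traj M) (t : ℕ) : M.Y := ω.2.2.2.2.2.2.1 (idx M t)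
def U1v (ω : Traj M) (t : ℕ) : M.U1 := ω.2.2.2.2.2.2.2.1 (idx M t)
def U2v (ω : Traj M) (t : ℕ) : M.U2 := ω.2.2.2.2.2.2.2.2.1 (idx M t)
def UAv (ω : Traj M) (t : ℕ) : M.Ua := ω.2.2.2.2.2.2.2.2.2 (idx M t)
def Mv (ω : Traj M) (t : ℕ) : Bool × Bool := (M1v ω t, M2v ω t)

/-- The list of values `f 0, f 1, …, f (t-1)` (a "prefix" of a stochastic process). -/
def pre {α : Type _} (t : ℕ) (f : ℕ → α) : List α := (List.range t).map f

/-- Realizations of agent 1's information `I¹_t` (resp. `I¹_{t⁺}`):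
`(X⁰_{1:t}, X¹_{1:t}, U¹_{1:t-1}, M_{1:t-1}, Z^er_{1:t-1}, Uᵃ_{1:t-1}, Y_{1:t-1})`. -/
abbrev Hist1 (M : Model) :=
  List M.X0 × List M.X1 × List M.U1 × List (Bool × Bool) ×
  List (Option (M.X1 × M.X2)) × List M.Ua × List M.Y

/-- Realizations of agent 2's information `I²_t` (resp. `I²_{t⁺}`). -/
abbrev Hist2 (M : Model) :=
  List M.X0 × List M.X2 × List M.U2 × List (Bool × Bool) ×
  List (Option (M.X1 × M.X2)) × List M.Ua × List M.Y

/-- Realizations of the team's common information `C^team_t = I¹_t ∩ I²_t`. -/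
abbrev HistC (M : Model) :=
  List M.X0 × List (Bool × Bool) × List (Option (M.X1 × M.X2)) × List M.Ua × List M.Y

def info1 (t : ℕ) (ω : Traj M) : Hist1 M :=
  (pre (t+1) (X0v ω), pre (t+1) (X1v ω), pre t (U1v ω), pre t (Mv ω),
   pre t (Zv ω), pre t (UAv ω), pre t (Yv ω))

def info1p (t : ℕ) (ω : Traj M) : Hist1 M :=
  (pre (t+1) (X0v ω), pre (t+1) (X1v ω), pre t (U1v ω), pre (t+1) (Mv ω),
   pre (t+1) (Zv ω), pre t (UAv ω), pre (t+1) (Yv ω))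

def info2 (t : ℕ) (ω : Traj M) : Hist2 M :=
  (pre (t+1) (X0v ω), pre (t+1) (X2v ω), pre t (U2v ω), pre t (Mv ω),
   pre t (Zv ω), pre t (UAv ω), pre t (Yv ω))

def info2p (t : ℕ) (ω : Traj M) : Hist2 M :=
  (pre (t+1) (X0v ω), pre (t+1) (X2v ω), pre t (U2v ω), pre (t+1) (Mv ω),
   pre (t+1) (Zv ω), pre t (UAv ω), pre (t+1) (Yv ω))

/-- The team's common information `C^team_t` before communication at time `t`. -/
def teamCom (t : ℕ) (ω : Traj M) : HistC M :=
  (pre (t+1) (X0v ω), pre t (Mv ω), pre t (Zv ω), pre t (UAv ω), pre t (Yv ω))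

/-- The team's common information `C^team_{t⁺}` after communication at time `t`. -/
def teamComP (t : ℕ) (ω : Traj M) : HistC M :=
  (pre (t+1) (X0v ω), pre (t+1) (Mv ω), pre (t+1) (Zv ω), pre t (UAv ω), pre (t+1) (Yv ω))

/-- A behavioral communication/control strategy pair `(f,g) = (f¹,f²,g¹,g²)` for the team:
`fⁱ_t` selects a distribution on `{0,1}` for `Mⁱ_t` given `Iⁱ_t`; `gⁱ_t` selects a
distribution on `𝒰ⁱ` for `Uⁱ_t` given `Iⁱ_{t⁺}`. -/
structure TeamStrategy (M : Model) where
  f1 : ℕ → Hist1 M → Bool → ℝ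
  f2 : ℕ → Hist2 M → Bool → ℝ
  g1 : ℕ → Hist1 M → M.U1 → ℝ
  g2 : ℕ → Hist2 M → M.U2 → ℝ
  f1_nonneg : ∀ t h m, 0 ≤ f1 t h m
  f2_nonneg : ∀ t h m, 0 ≤ f2 t h m
  g1_nonneg : ∀ t h u, 0 ≤ g1 t h u
  g2_nonneg : ∀ t h u, 0 ≤ g2 t h u
  f1_sum : ∀ t h, ∑ m, f1 t h m = 1
  f2_sum : ∀ t h, ∑ m, f2 t h m = 1
  g1_sum : ∀ t h, ∑ u, g1 t h u = 1
  g2_sum : ∀ t h, ∑ u, g2 t h u = 1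

/-- A behavioral strategy for the adversary: `gᵃ_t` selects a distribution on `𝒰ᵃ`
given the adversary's information `Iᵃ_{t⁺}`, whose realizations live in `A`. -/
structure AdvStrategy (M : Model) (A : Type _) where
  ga : ℕ → A → M.Ua → ℝ
  ga_nonneg : ∀ t a u, 0 ≤ ga t a u
  ga_sum : ∀ t a, ∑ u, ga t a u = 1

/-- The kernel of the erasure channel: if `M^or_t = 0`, no message; if `M^or_t = 1`, the
joint local state is delivered w.p. `1 - pe(x⁰)` and erased w.p. `pe(x⁰)`. -/
noncomputable def zKer (M : Model) (x0 : M.X0) (m : Bool × Bool) (x : M.X1 × M.X2)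
    (z : Option (M.X1 × M.X2)) : ℝ :=
  if m = (false, false) then (if z = none then 1 else 0)
  else
    match z with
    | none => M.pe x0
    | some x' => if x' = x then 1 - M.pe x0 else 0

/-- The probability of a full trajectory under the team strategy `σ`, the adversary
strategy `γ`, where `iap t ω` is the realization of the adversary's information
`Iᵃ_{t⁺}` along `ω` (this parametrizes the adversary's information structure). -/
noncomputable def prob (σ : TeamStrategy M) {A : Type _} (γ : AdvStrategy M A)
    (iap : ℕ → Traj M → A) (ω : Traj M) : ℝ :=
  M.init0 (X0v ω 0) * M.init1 (X1v ω 0) * M.init2 (X2v ω 0) *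
  (∏ t ∈ Finset.range M.T,
    (σ.f1 t (info1 t ω) (M1v ω t) * σ.f2 t (info2 t ω) (M2v ω t) *
     zKer M (X0v ω t) (Mv ω t) (X1v ω t, X2v ω t) (Zv ω t) *
     M.obs (Zv ω t) (Mv ω t) (X0v ω t) (Yv ω t) *
     σ.g1 t (info1p t ω) (U1v ω t) * σ.g2 t (info2p t ω) (U2v ω t) *
     γ.ga t (iap t ω) (UAv ω t))) *
  (∏ t ∈ Finset.range (M.T - 1),
    (M.trans0 (X0v ω t) (UAv ω t) (X0v ω (t+1)) *
     M.trans1 (X0v ω t) (X1v ω t) (U1v ω t) (X1v ω (t+1)) *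
     M.trans2 (X0v ω t) (X2v ω t) (U2v ω t) (X2v ω (t+1))))

/-- Probability of an event (a set of trajectories). -/
noncomputable def pr (σ : TeamStrategy M) {A : Type _} (γ : AdvStrategy M A)
    (iap : ℕ → Traj M → A) (E : Traj M → Prop) : ℝ :=
  ∑ ω : Traj M, if E ω then prob σ γ iap ω else 0

/-- Conditional probability `P(F | E)`. -/
noncomputable def cpr (σ : TeamStrategy M) {A : Type _} (γ : AdvStrategy M A)
    (iap : ℕ → Traj M → A) (E F : Traj M → Prop) : ℝ :=
  pr σ γ iap (fun ω => F ω ∧ E ω) / pr σ γ iap E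

/-- Total cost `Σ_t c_t(X⁰_t,X_t,U_t,Uᵃ_t) + ρ(X⁰_t,X_t) 1{M^or_t = 1}` along a trajectory. -/
noncomputable def totalCost (ω : Traj M) : ℝ :=
  ∑ t ∈ Finset.range M.T,
    (M.cost t (X0v ω t) (X1v ω t, X2v ω t) (U1v ω t, U2v ω t) (UAv ω t) +
     (if (M1v ω t || M2v ω t) then M.commCost (X0v ω t) (X1v ω t, X2v ω t) else 0))

/-- Expected total cost `J((f,g),gᵃ)`. -/
noncomputable def J (σ : TeamStrategy M) {A : Type _} (γ : AdvStrategy M A)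
    (iap : ℕ → Traj M → A) : ℝ :=
  ∑ ω : Traj M, prob σ γ iap ω * totalCost ω

end TA
namespace TA

/-- An abstract information structure for the adversary satisfying the structural parts of
Assumption 1: the common information `C_t = Iᵃ_t` (resp. `C_{t⁺} = Iᵃ_{t⁺}`) and the team's
common private information `D_t = P¹_t ∩ P²_t` (resp. `D_{t⁺}`) are deterministic functions
of the trajectory; together, `(C_t, D_t)` carries exactly the team's common information
`C^team_t = I¹_t ∩ I²_t` (nestedness: `C_t ⊆ I¹_t ∩ I²_t` and `C_t ∪ D_t = C^team_t`);
and the adversary's information grows with time (monotonicity: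
`Iᵃ_t ⊆ Iᵃ_{t⁺} ⊆ Iᵃ_{t+1}`, expressed as: finer information determines coarser one). -/
structure InfoStructure (M : Model) where
  C : Type
  D : Type
  infoC : ℕ → Traj M → C
  infoCp : ℕ → Traj M → C
  infoD : ℕ → Traj M → D
  infoDp : ℕ → Traj M → D
  cd_team : ∀ (t : ℕ) (ω ω' : Traj M),
    (infoC t ω = infoC t ω' ∧ infoD t ω = infoD t ω') ↔ teamCom t ω = teamCom t ω'
  cdp_team : ∀ (t : ℕ) (ω ω' : Traj M),
    (infoCp t ω = infoCp t ω' ∧ infoDp t ω = infoDp t ω') ↔ teamComP t ω = teamComP t ω'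
  mono1 : ∀ (t : ℕ) (ω ω' : Traj M), infoCp t ω = infoCp t ω' → infoC t ω = infoC t ω'
  mono2 : ∀ (t : ℕ) (ω ω' : Traj M), infoC (t+1) ω = infoC (t+1) ω' → infoCp t ω = infoCp t ω'

end TA


namespace TA

/-! ### Auxiliary development for Lemma 1 -/

section Aux

variable {M : Model}

/-! #### Lemmas about `pre` -/

lemma pre_succ {α : Type _} (n : ℕ) (f : ℕ → α) : pre (n+1) f = pre n f ++ [f n] := by
  simp [pre, List.range_succ]

lemma pre_length {α : Type _} (n : ℕ) (f : ℕ → α) : (pre n f).length = n := by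
  simp [pre]

lemma pre_congr {α : Type _} {n : ℕ} {f g : ℕ → α} (h : ∀ s, s < n → f s = g s) :
    pre n f = pre n g := by
  induction n with
  | zero => rfl
  | succ n ih =>
    rw [pre_succ, pre_succ, ih (fun s hs => h s (by omega)), h n (by omega)]

lemma pre_pt {α : Type _} {n : ℕ} {f g : ℕ → α} (hfg : pre n f = pre n g)
    {s : ℕ} (hs : s < n) : f s = g s := by
  induction n with
  | zero => omega
  | succ n ih =>
    rw [pre_succ, pre_succ] at hfg
    have hl := List.append_inj hfg (by simp [pre_length])
    rcases Nat.lt_succ_iff_lt_or_eq.mp hs with h' | h'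
    · exact ih hl.1 h'
    · subst h'; simpa using hl.2

lemma pre_mono {α : Type _} {m n : ℕ} (h : m ≤ n) {f g : ℕ → α}
    (hfg : pre n f = pre n g) : pre m f = pre m g :=
  pre_congr (fun s hs => pre_pt hfg (lt_of_lt_of_le hs h))

/-! #### A generic splitting lemma for sums -/

lemma split_sum {Ω α : Type _} [Fintype Ω] [Fintype α] [Nonempty α]
    (upd : Ω → α → Ω) (get : Ω → α)
    (hget : ∀ ω a, get (upd ω a) = a)
    (hid : ∀ ω, upd ω (get ω) = ω)
    (hupd : ∀ ω a b, upd (upd ω a) b = upd ω b)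
    (f g : Ω → ℝ)
    (hf : ∀ ω a, f (upd ω a) = f ω)
    (hg : ∀ ω, ∑ a, g (upd ω a) = 1) :
    (Fintype.card α : ℝ) * ∑ ω, f ω * g ω = ∑ ω, f ω := by
  classical
  obtain ⟨a0⟩ := ‹Nonempty α›
  let e : α × {ω : Ω // get ω = a0} ≃ Ω :=
    { toFun := fun p => upd p.2.1 p.1
      invFun := fun ω => (get ω, ⟨upd ω a0, hget ω a0⟩)
      left_inv := by
        rintro ⟨a, ω, hω⟩
        simp only [hget, hupd, Prod.mk.injEq]
        exact ⟨trivial, Subtype.ext (hω ▸ hid ω)⟩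
      right_inv := fun ω => by
        show upd (upd ω a0) (get ω) = ω
        rw [hupd, hid] }
  have key : ∀ F : Ω → ℝ,
      ∑ ω, F ω = ∑ a, ∑ ω0 : {ω : Ω // get ω = a0}, F (upd ω0.1 a) := by
    intro F
    rw [← Equiv.sum_comp e F, Fintype.sum_prod_type]
    rfl
  rw [key (fun ω => f ω * g ω), key f]
  simp only [hf]
  have l1 : ∑ a : α, ∑ ω0 : {ω : Ω // get ω = a0}, f ω0.1 * g (upd ω0.1 a)
      = ∑ ω0 : {ω : Ω // get ω = a0}, f ω0.1 := by
    rw [Finset.sum_comm]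
    refine Finset.sum_congr rfl fun ω0 _ => ?_
    rw [← Finset.mul_sum, hg, mul_one]
  rw [l1, Finset.sum_const, Finset.card_univ, nsmul_eq_mul]

/-! #### Coordinate updates on trajectories -/

def updX0 (ω : Traj M) (j : Fin M.T) (a : M.X0) : Traj M :=
  (Function.update ω.1 j a, ω.2)
def updX1 (ω : Traj M) (j : Fin M.T) (a : M.X1) : Traj M :=
  (ω.1, Function.update ω.2.1 j a, ω.2.2)
def updX2 (ω : Traj M) (j : Fin M.T) (a : M.X2) : Traj M :=
  (ω.1, ω.2.1, Function.update ω.2.2.1 j a, ω.2.2.2)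
def updM1 (ω : Traj M) (j : Fin M.T) (a : Bool) : Traj M :=
  (ω.1, ω.2.1, ω.2.2.1, Function.update ω.2.2.2.1 j a, ω.2.2.2.2)
def updM2 (ω : Traj M) (j : Fin M.T) (a : Bool) : Traj M :=
  (ω.1, ω.2.1, ω.2.2.1, ω.2.2.2.1, Function.update ω.2.2.2.2.1 j a, ω.2.2.2.2.2)
def updZ (ω : Traj M) (j : Fin M.T) (a : Option (M.X1 × M.X2)) : Traj M :=
  (ω.1, ω.2.1, ω.2.2.1, ω.2.2.2.1, ω.2.2.2.2.1, Function.update ω.2.2.2.2.2.1 j a,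
   ω.2.2.2.2.2.2)
def updY (ω : Traj M) (j : Fin M.T) (a : M.Y) : Traj M :=
  (ω.1, ω.2.1, ω.2.2.1, ω.2.2.2.1, ω.2.2.2.2.1, ω.2.2.2.2.2.1,
   Function.update ω.2.2.2.2.2.2.1 j a, ω.2.2.2.2.2.2.2)
def updU1 (ω : Traj M) (j : Fin M.T) (a : M.U1) : Traj M :=
  (ω.1, ω.2.1, ω.2.2.1, ω.2.2.2.1, ω.2.2.2.2.1, ω.2.2.2.2.2.1, ω.2.2.2.2.2.2.1,
   Function.update ω.2.2.2.2.2.2.2.1 j a, ω.2.2.2.2.2.2.2.2)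
def updU2 (ω : Traj M) (j : Fin M.T) (a : M.U2) : Traj M :=
  (ω.1, ω.2.1, ω.2.2.1, ω.2.2.2.1, ω.2.2.2.2.1, ω.2.2.2.2.2.1, ω.2.2.2.2.2.2.1,
   ω.2.2.2.2.2.2.2.1, Function.update ω.2.2.2.2.2.2.2.2.1 j a, ω.2.2.2.2.2.2.2.2.2)
def updUA (ω : Traj M) (j : Fin M.T) (a : M.Ua) : Traj M :=
  (ω.1, ω.2.1, ω.2.2.1, ω.2.2.2.1, ω.2.2.2.2.1, ω.2.2.2.2.2.1, ω.2.2.2.2.2.2.1,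
   ω.2.2.2.2.2.2.2.1, ω.2.2.2.2.2.2.2.2.1, Function.update ω.2.2.2.2.2.2.2.2.2 j a)

lemma idx_ne {r s : ℕ} (hr : r < M.T) (hs : s < r) : idx M s ≠ idx M r := by
  have h1 : ((idx M s : Fin M.T) : ℕ) = s := by simp [idx, hs.trans hr]
  have h2 : ((idx M r : Fin M.T) : ℕ) = r := by simp [idx, hr]
  intro hh
  rw [hh, h2] at h1
  omega

lemma update_pt {α : Type _} (f : Fin M.T → α) {r s : ℕ} (hr : r < M.T) (hs : s < r)
    (a : α) : Function.update f (idx M r) a (idx M s) = f (idx M s) :=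
  Function.update_of_ne (idx_ne hr hs) a f

end Aux

end TA

namespace TA

section Aux2

variable {M : Model}


@[simp] lemma X1v_updX0 (ω : Traj M) (j : Fin M.T) (a : M.X0) :
    X1v (updX0 ω j a) = X1v ω := rfl

@[simp] lemma X2v_updX0 (ω : Traj M) (j : Fin M.T) (a : M.X0) :
    X2v (updX0 ω j a) = X2v ω := rfl

@[simp] lemma M1v_updX0 (ω : Traj M) (j : Fin M.T) (a : M.X0) :
    M1v (updX0 ω j a) = M1v ω := rfl

@[simp] lemma M2v_updX0 (ω : Traj M) (j : Fin M.T) (a : M.X0) :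
    M2v (updX0 ω j a) = M2v ω := rfl

@[simp] lemma Zv_updX0 (ω : Traj M) (j : Fin M.T) (a : M.X0) :
    Zv (updX0 ω j a) = Zv ω := rfl

@[simp] lemma Yv_updX0 (ω : Traj M) (j : Fin M.T) (a : M.X0) :
    Yv (updX0 ω j a) = Yv ω := rfl

@[simp] lemma U1v_updX0 (ω : Traj M) (j : Fin M.T) (a : M.X0) :
    U1v (updX0 ω j a) = U1v ω := rfl

@[simp] lemma U2v_updX0 (ω : Traj M) (j : Fin M.T) (a : M.X0) :
    U2v (updX0 ω j a) = U2v ω := rfl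

@[simp] lemma UAv_updX0 (ω : Traj M) (j : Fin M.T) (a : M.X0) :
    UAv (updX0 ω j a) = UAv ω := rfl

@[simp] lemma Mv_updX0 (ω : Traj M) (j : Fin M.T) (a : M.X0) :
    Mv (updX0 ω j a) = Mv ω := rfl

@[simp] lemma X0v_updX1 (ω : Traj M) (j : Fin M.T) (a : M.X1) :
    X0v (updX1 ω j a) = X0v ω := rfl

@[simp] lemma X2v_updX1 (ω : Traj M) (j : Fin M.T) (a : M.X1) :
    X2v (updX1 ω j a) = X2v ω := rfl

@[simp] lemma M1v_updX1 (ω : Traj M) (j : Fin M.T) (a : M.X1) :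
    M1v (updX1 ω j a) = M1v ω := rfl

@[simp] lemma M2v_updX1 (ω : Traj M) (j : Fin M.T) (a : M.X1) :
    M2v (updX1 ω j a) = M2v ω := rfl

@[simp] lemma Zv_updX1 (ω : Traj M) (j : Fin M.T) (a : M.X1) :
    Zv (updX1 ω j a) = Zv ω := rfl

@[simp] lemma Yv_updX1 (ω : Traj M) (j : Fin M.T) (a : M.X1) :
    Yv (updX1 ω j a) = Yv ω := rfl

@[simp] lemma U1v_updX1 (ω : Traj M) (j : Fin M.T) (a : M.X1) :
    U1v (updX1 ω j a) = U1v ω := rfl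

@[simp] lemma U2v_updX1 (ω : Traj M) (j : Fin M.T) (a : M.X1) :
    U2v (updX1 ω j a) = U2v ω := rfl

@[simp] lemma UAv_updX1 (ω : Traj M) (j : Fin M.T) (a : M.X1) :
    UAv (updX1 ω j a) = UAv ω := rfl

@[simp] lemma Mv_updX1 (ω : Traj M) (j : Fin M.T) (a : M.X1) :
    Mv (updX1 ω j a) = Mv ω := rfl

@[simp] lemma X0v_updX2 (ω : Traj M) (j : Fin M.T) (a : M.X2) :
    X0v (updX2 ω j a) = X0v ω := rfl

@[simp] lemma X1v_updX2 (ω : Traj M) (j : Fin M.T) (a : M.X2) :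
    X1v (updX2 ω j a) = X1v ω := rfl

@[simp] lemma M1v_updX2 (ω : Traj M) (j : Fin M.T) (a : M.X2) :
    M1v (updX2 ω j a) = M1v ω := rfl

@[simp] lemma M2v_updX2 (ω : Traj M) (j : Fin M.T) (a : M.X2) :
    M2v (updX2 ω j a) = M2v ω := rfl

@[simp] lemma Zv_updX2 (ω : Traj M) (j : Fin M.T) (a : M.X2) :
    Zv (updX2 ω j a) = Zv ω := rfl

@[simp] lemma Yv_updX2 (ω : Traj M) (j : Fin M.T) (a : M.X2) :
    Yv (updX2 ω j a) = Yv ω := rfl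

@[simp] lemma U1v_updX2 (ω : Traj M) (j : Fin M.T) (a : M.X2) :
    U1v (updX2 ω j a) = U1v ω := rfl

@[simp] lemma U2v_updX2 (ω : Traj M) (j : Fin M.T) (a : M.X2) :
    U2v (updX2 ω j a) = U2v ω := rfl

@[simp] lemma UAv_updX2 (ω : Traj M) (j : Fin M.T) (a : M.X2) :
    UAv (updX2 ω j a) = UAv ω := rfl

@[simp] lemma Mv_updX2 (ω : Traj M) (j : Fin M.T) (a : M.X2) :
    Mv (updX2 ω j a) = Mv ω := rfl

@[simp] lemma X0v_updM1 (ω : Traj M) (j : Fin M.T) (a : Bool) :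
    X0v (updM1 ω j a) = X0v ω := rfl

@[simp] lemma X1v_updM1 (ω : Traj M) (j : Fin M.T) (a : Bool) :
    X1v (updM1 ω j a) = X1v ω := rfl

@[simp] lemma X2v_updM1 (ω : Traj M) (j : Fin M.T) (a : Bool) :
    X2v (updM1 ω j a) = X2v ω := rfl

@[simp] lemma M2v_updM1 (ω : Traj M) (j : Fin M.T) (a : Bool) :
    M2v (updM1 ω j a) = M2v ω := rfl

@[simp] lemma Zv_updM1 (ω : Traj M) (j : Fin M.T) (a : Bool) :
    Zv (updM1 ω j a) = Zv ω := rfl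

@[simp] lemma Yv_updM1 (ω : Traj M) (j : Fin M.T) (a : Bool) :
    Yv (updM1 ω j a) = Yv ω := rfl

@[simp] lemma U1v_updM1 (ω : Traj M) (j : Fin M.T) (a : Bool) :
    U1v (updM1 ω j a) = U1v ω := rfl

@[simp] lemma U2v_updM1 (ω : Traj M) (j : Fin M.T) (a : Bool) :
    U2v (updM1 ω j a) = U2v ω := rfl

@[simp] lemma UAv_updM1 (ω : Traj M) (j : Fin M.T) (a : Bool) :
    UAv (updM1 ω j a) = UAv ω := rfl

@[simp] lemma X0v_updM2 (ω : Traj M) (j : Fin M.T) (a : Bool) :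
    X0v (updM2 ω j a) = X0v ω := rfl

@[simp] lemma X1v_updM2 (ω : Traj M) (j : Fin M.T) (a : Bool) :
    X1v (updM2 ω j a) = X1v ω := rfl

@[simp] lemma X2v_updM2 (ω : Traj M) (j : Fin M.T) (a : Bool) :
    X2v (updM2 ω j a) = X2v ω := rfl

@[simp] lemma M1v_updM2 (ω : Traj M) (j : Fin M.T) (a : Bool) :
    M1v (updM2 ω j a) = M1v ω := rfl

@[simp] lemma Zv_updM2 (ω : Traj M) (j : Fin M.T) (a : Bool) :
    Zv (updM2 ω j a) = Zv ω := rfl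

@[simp] lemma Yv_updM2 (ω : Traj M) (j : Fin M.T) (a : Bool) :
    Yv (updM2 ω j a) = Yv ω := rfl

@[simp] lemma U1v_updM2 (ω : Traj M) (j : Fin M.T) (a : Bool) :
    U1v (updM2 ω j a) = U1v ω := rfl

@[simp] lemma U2v_updM2 (ω : Traj M) (j : Fin M.T) (a : Bool) :
    U2v (updM2 ω j a) = U2v ω := rfl

@[simp] lemma UAv_updM2 (ω : Traj M) (j : Fin M.T) (a : Bool) :
    UAv (updM2 ω j a) = UAv ω := rfl

@[simp] lemma X0v_updZ (ω : Traj M) (j : Fin M.T) (a : Option (M.X1 × M.X2)) :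
    X0v (updZ ω j a) = X0v ω := rfl

@[simp] lemma X1v_updZ (ω : Traj M) (j : Fin M.T) (a : Option (M.X1 × M.X2)) :
    X1v (updZ ω j a) = X1v ω := rfl

@[simp] lemma X2v_updZ (ω : Traj M) (j : Fin M.T) (a : Option (M.X1 × M.X2)) :
    X2v (updZ ω j a) = X2v ω := rfl

@[simp] lemma M1v_updZ (ω : Traj M) (j : Fin M.T) (a : Option (M.X1 × M.X2)) :
    M1v (updZ ω j a) = M1v ω := rfl

@[simp] lemma M2v_updZ (ω : Traj M) (j : Fin M.T) (a : Option (M.X1 × M.X2)) :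
    M2v (updZ ω j a) = M2v ω := rfl

@[simp] lemma Yv_updZ (ω : Traj M) (j : Fin M.T) (a : Option (M.X1 × M.X2)) :
    Yv (updZ ω j a) = Yv ω := rfl

@[simp] lemma U1v_updZ (ω : Traj M) (j : Fin M.T) (a : Option (M.X1 × M.X2)) :
    U1v (updZ ω j a) = U1v ω := rfl

@[simp] lemma U2v_updZ (ω : Traj M) (j : Fin M.T) (a : Option (M.X1 × M.X2)) :
    U2v (updZ ω j a) = U2v ω := rfl

@[simp] lemma UAv_updZ (ω : Traj M) (j : Fin M.T) (a : Option (M.X1 × M.X2)) :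
    UAv (updZ ω j a) = UAv ω := rfl

@[simp] lemma Mv_updZ (ω : Traj M) (j : Fin M.T) (a : Option (M.X1 × M.X2)) :
    Mv (updZ ω j a) = Mv ω := rfl

@[simp] lemma X0v_updY (ω : Traj M) (j : Fin M.T) (a : M.Y) :
    X0v (updY ω j a) = X0v ω := rfl

@[simp] lemma X1v_updY (ω : Traj M) (j : Fin M.T) (a : M.Y) :
    X1v (updY ω j a) = X1v ω := rfl

@[simp] lemma X2v_updY (ω : Traj M) (j : Fin M.T) (a : M.Y) :
    X2v (updY ω j a) = X2v ω := rfl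

@[simp] lemma M1v_updY (ω : Traj M) (j : Fin M.T) (a : M.Y) :
    M1v (updY ω j a) = M1v ω := rfl

@[simp] lemma M2v_updY (ω : Traj M) (j : Fin M.T) (a : M.Y) :
    M2v (updY ω j a) = M2v ω := rfl

@[simp] lemma Zv_updY (ω : Traj M) (j : Fin M.T) (a : M.Y) :
    Zv (updY ω j a) = Zv ω := rfl

@[simp] lemma U1v_updY (ω : Traj M) (j : Fin M.T) (a : M.Y) :
    U1v (updY ω j a) = U1v ω := rfl

@[simp] lemma U2v_updY (ω : Traj M) (j : Fin M.T) (a : M.Y) :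
    U2v (updY ω j a) = U2v ω := rfl

@[simp] lemma UAv_updY (ω : Traj M) (j : Fin M.T) (a : M.Y) :
    UAv (updY ω j a) = UAv ω := rfl

@[simp] lemma Mv_updY (ω : Traj M) (j : Fin M.T) (a : M.Y) :
    Mv (updY ω j a) = Mv ω := rfl

@[simp] lemma X0v_updU1 (ω : Traj M) (j : Fin M.T) (a : M.U1) :
    X0v (updU1 ω j a) = X0v ω := rfl

@[simp] lemma X1v_updU1 (ω : Traj M) (j : Fin M.T) (a : M.U1) :
    X1v (updU1 ω j a) = X1v ω := rfl

@[simp] lemma X2v_updU1 (ω : Traj M) (j : Fin M.T) (a : M.U1) :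
    X2v (updU1 ω j a) = X2v ω := rfl

@[simp] lemma M1v_updU1 (ω : Traj M) (j : Fin M.T) (a : M.U1) :
    M1v (updU1 ω j a) = M1v ω := rfl

@[simp] lemma M2v_updU1 (ω : Traj M) (j : Fin M.T) (a : M.U1) :
    M2v (updU1 ω j a) = M2v ω := rfl

@[simp] lemma Zv_updU1 (ω : Traj M) (j : Fin M.T) (a : M.U1) :
    Zv (updU1 ω j a) = Zv ω := rfl

@[simp] lemma Yv_updU1 (ω : Traj M) (j : Fin M.T) (a : M.U1) :
    Yv (updU1 ω j a) = Yv ω := rfl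

@[simp] lemma U2v_updU1 (ω : Traj M) (j : Fin M.T) (a : M.U1) :
    U2v (updU1 ω j a) = U2v ω := rfl

@[simp] lemma UAv_updU1 (ω : Traj M) (j : Fin M.T) (a : M.U1) :
    UAv (updU1 ω j a) = UAv ω := rfl

@[simp] lemma Mv_updU1 (ω : Traj M) (j : Fin M.T) (a : M.U1) :
    Mv (updU1 ω j a) = Mv ω := rfl

@[simp] lemma X0v_updU2 (ω : Traj M) (j : Fin M.T) (a : M.U2) :
    X0v (updU2 ω j a) = X0v ω := rfl

@[simp] lemma X1v_updU2 (ω : Traj M) (j : Fin M.T) (a : M.U2) :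
    X1v (updU2 ω j a) = X1v ω := rfl

@[simp] lemma X2v_updU2 (ω : Traj M) (j : Fin M.T) (a : M.U2) :
    X2v (updU2 ω j a) = X2v ω := rfl

@[simp] lemma M1v_updU2 (ω : Traj M) (j : Fin M.T) (a : M.U2) :
    M1v (updU2 ω j a) = M1v ω := rfl

@[simp] lemma M2v_updU2 (ω : Traj M) (j : Fin M.T) (a : M.U2) :
    M2v (updU2 ω j a) = M2v ω := rfl

@[simp] lemma Zv_updU2 (ω : Traj M) (j : Fin M.T) (a : M.U2) :
    Zv (updU2 ω j a) = Zv ω := rfl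

@[simp] lemma Yv_updU2 (ω : Traj M) (j : Fin M.T) (a : M.U2) :
    Yv (updU2 ω j a) = Yv ω := rfl

@[simp] lemma U1v_updU2 (ω : Traj M) (j : Fin M.T) (a : M.U2) :
    U1v (updU2 ω j a) = U1v ω := rfl

@[simp] lemma UAv_updU2 (ω : Traj M) (j : Fin M.T) (a : M.U2) :
    UAv (updU2 ω j a) = UAv ω := rfl

@[simp] lemma Mv_updU2 (ω : Traj M) (j : Fin M.T) (a : M.U2) :
    Mv (updU2 ω j a) = Mv ω := rfl

@[simp] lemma X0v_updUA (ω : Traj M) (j : Fin M.T) (a : M.Ua) :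
    X0v (updUA ω j a) = X0v ω := rfl

@[simp] lemma X1v_updUA (ω : Traj M) (j : Fin M.T) (a : M.Ua) :
    X1v (updUA ω j a) = X1v ω := rfl

@[simp] lemma X2v_updUA (ω : Traj M) (j : Fin M.T) (a : M.Ua) :
    X2v (updUA ω j a) = X2v ω := rfl

@[simp] lemma M1v_updUA (ω : Traj M) (j : Fin M.T) (a : M.Ua) :
    M1v (updUA ω j a) = M1v ω := rfl

@[simp] lemma M2v_updUA (ω : Traj M) (j : Fin M.T) (a : M.Ua) :
    M2v (updUA ω j a) = M2v ω := rfl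

@[simp] lemma Zv_updUA (ω : Traj M) (j : Fin M.T) (a : M.Ua) :
    Zv (updUA ω j a) = Zv ω := rfl

@[simp] lemma Yv_updUA (ω : Traj M) (j : Fin M.T) (a : M.Ua) :
    Yv (updUA ω j a) = Yv ω := rfl

@[simp] lemma U1v_updUA (ω : Traj M) (j : Fin M.T) (a : M.Ua) :
    U1v (updUA ω j a) = U1v ω := rfl

@[simp] lemma U2v_updUA (ω : Traj M) (j : Fin M.T) (a : M.Ua) :
    U2v (updUA ω j a) = U2v ω := rfl

@[simp] lemma Mv_updUA (ω : Traj M) (j : Fin M.T) (a : M.Ua) :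
    Mv (updUA ω j a) = Mv ω := rfl

lemma X0v_updX0_lt (ω : Traj M) {r s : ℕ} (hr : r < M.T) (hs : s < r) (a : M.X0) :
    X0v (updX0 ω (idx M r) a) s = X0v ω s := update_pt ω.1 hr hs a

lemma X0v_updX0_self (ω : Traj M) (r : ℕ) (a : M.X0) :
    X0v (updX0 ω (idx M r) a) r = a := Function.update_self _ _ _

lemma pre_X0v_updX0 (ω : Traj M) {r n : ℕ} (hr : r < M.T) (hn : n ≤ r) (a : M.X0) :
    pre n (X0v (updX0 ω (idx M r) a)) = pre n (X0v ω) :=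
  pre_congr fun s hs => X0v_updX0_lt ω hr (by omega) a

lemma X1v_updX1_lt (ω : Traj M) {r s : ℕ} (hr : r < M.T) (hs : s < r) (a : M.X1) :
    X1v (updX1 ω (idx M r) a) s = X1v ω s := update_pt ω.2.1 hr hs a

lemma X1v_updX1_self (ω : Traj M) (r : ℕ) (a : M.X1) :
    X1v (updX1 ω (idx M r) a) r = a := Function.update_self _ _ _

lemma pre_X1v_updX1 (ω : Traj M) {r n : ℕ} (hr : r < M.T) (hn : n ≤ r) (a : M.X1) :
    pre n (X1v (updX1 ω (idx M r) a)) = pre n (X1v ω) :=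
  pre_congr fun s hs => X1v_updX1_lt ω hr (by omega) a

lemma X2v_updX2_lt (ω : Traj M) {r s : ℕ} (hr : r < M.T) (hs : s < r) (a : M.X2) :
    X2v (updX2 ω (idx M r) a) s = X2v ω s := update_pt ω.2.2.1 hr hs a

lemma X2v_updX2_self (ω : Traj M) (r : ℕ) (a : M.X2) :
    X2v (updX2 ω (idx M r) a) r = a := Function.update_self _ _ _

lemma pre_X2v_updX2 (ω : Traj M) {r n : ℕ} (hr : r < M.T) (hn : n ≤ r) (a : M.X2) :
    pre n (X2v (updX2 ω (idx M r) a)) = pre n (X2v ω) :=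
  pre_congr fun s hs => X2v_updX2_lt ω hr (by omega) a

lemma M1v_updM1_lt (ω : Traj M) {r s : ℕ} (hr : r < M.T) (hs : s < r) (a : Bool) :
    M1v (updM1 ω (idx M r) a) s = M1v ω s := update_pt ω.2.2.2.1 hr hs a

lemma M1v_updM1_self (ω : Traj M) (r : ℕ) (a : Bool) :
    M1v (updM1 ω (idx M r) a) r = a := Function.update_self _ _ _

lemma pre_M1v_updM1 (ω : Traj M) {r n : ℕ} (hr : r < M.T) (hn : n ≤ r) (a : Bool) :
    pre n (M1v (updM1 ω (idx M r) a)) = pre n (M1v ω) :=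
  pre_congr fun s hs => M1v_updM1_lt ω hr (by omega) a

lemma M2v_updM2_lt (ω : Traj M) {r s : ℕ} (hr : r < M.T) (hs : s < r) (a : Bool) :
    M2v (updM2 ω (idx M r) a) s = M2v ω s := update_pt ω.2.2.2.2.1 hr hs a

lemma M2v_updM2_self (ω : Traj M) (r : ℕ) (a : Bool) :
    M2v (updM2 ω (idx M r) a) r = a := Function.update_self _ _ _

lemma pre_M2v_updM2 (ω : Traj M) {r n : ℕ} (hr : r < M.T) (hn : n ≤ r) (a : Bool) :
    pre n (M2v (updM2 ω (idx M r) a)) = pre n (M2v ω) :=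
  pre_congr fun s hs => M2v_updM2_lt ω hr (by omega) a

lemma Zv_updZ_lt (ω : Traj M) {r s : ℕ} (hr : r < M.T) (hs : s < r) (a : Option (M.X1 × M.X2)) :
    Zv (updZ ω (idx M r) a) s = Zv ω s := update_pt ω.2.2.2.2.2.1 hr hs a

lemma Zv_updZ_self (ω : Traj M) (r : ℕ) (a : Option (M.X1 × M.X2)) :
    Zv (updZ ω (idx M r) a) r = a := Function.update_self _ _ _

lemma pre_Zv_updZ (ω : Traj M) {r n : ℕ} (hr : r < M.T) (hn : n ≤ r) (a : Option (M.X1 × M.X2)) :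
    pre n (Zv (updZ ω (idx M r) a)) = pre n (Zv ω) :=
  pre_congr fun s hs => Zv_updZ_lt ω hr (by omega) a

lemma Yv_updY_lt (ω : Traj M) {r s : ℕ} (hr : r < M.T) (hs : s < r) (a : M.Y) :
    Yv (updY ω (idx M r) a) s = Yv ω s := update_pt ω.2.2.2.2.2.2.1 hr hs a

lemma Yv_updY_self (ω : Traj M) (r : ℕ) (a : M.Y) :
    Yv (updY ω (idx M r) a) r = a := Function.update_self _ _ _

lemma pre_Yv_updY (ω : Traj M) {r n : ℕ} (hr : r < M.T) (hn : n ≤ r) (a : M.Y) :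
    pre n (Yv (updY ω (idx M r) a)) = pre n (Yv ω) :=
  pre_congr fun s hs => Yv_updY_lt ω hr (by omega) a

lemma U1v_updU1_lt (ω : Traj M) {r s : ℕ} (hr : r < M.T) (hs : s < r) (a : M.U1) :
    U1v (updU1 ω (idx M r) a) s = U1v ω s := update_pt ω.2.2.2.2.2.2.2.1 hr hs a

lemma U1v_updU1_self (ω : Traj M) (r : ℕ) (a : M.U1) :
    U1v (updU1 ω (idx M r) a) r = a := Function.update_self _ _ _

lemma pre_U1v_updU1 (ω : Traj M) {r n : ℕ} (hr : r < M.T) (hn : n ≤ r) (a : M.U1) :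
    pre n (U1v (updU1 ω (idx M r) a)) = pre n (U1v ω) :=
  pre_congr fun s hs => U1v_updU1_lt ω hr (by omega) a

lemma U2v_updU2_lt (ω : Traj M) {r s : ℕ} (hr : r < M.T) (hs : s < r) (a : M.U2) :
    U2v (updU2 ω (idx M r) a) s = U2v ω s := update_pt ω.2.2.2.2.2.2.2.2.1 hr hs a

lemma U2v_updU2_self (ω : Traj M) (r : ℕ) (a : M.U2) :
    U2v (updU2 ω (idx M r) a) r = a := Function.update_self _ _ _

lemma pre_U2v_updU2 (ω : Traj M) {r n : ℕ} (hr : r < M.T) (hn : n ≤ r) (a : M.U2) :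
    pre n (U2v (updU2 ω (idx M r) a)) = pre n (U2v ω) :=
  pre_congr fun s hs => U2v_updU2_lt ω hr (by omega) a

lemma UAv_updUA_lt (ω : Traj M) {r s : ℕ} (hr : r < M.T) (hs : s < r) (a : M.Ua) :
    UAv (updUA ω (idx M r) a) s = UAv ω s := update_pt ω.2.2.2.2.2.2.2.2.2 hr hs a

lemma UAv_updUA_self (ω : Traj M) (r : ℕ) (a : M.Ua) :
    UAv (updUA ω (idx M r) a) r = a := Function.update_self _ _ _

lemma pre_UAv_updUA (ω : Traj M) {r n : ℕ} (hr : r < M.T) (hn : n ≤ r) (a : M.Ua) :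
    pre n (UAv (updUA ω (idx M r) a)) = pre n (UAv ω) :=
  pre_congr fun s hs => UAv_updUA_lt ω hr (by omega) a

lemma Mv_updM1_lt (ω : Traj M) {r s : ℕ} (hr : r < M.T) (hs : s < r) (a : Bool) :
    Mv (updM1 ω (idx M r) a) s = Mv ω s := by
  simp only [Mv, M2v_updM1, M1v_updM1_lt ω hr hs a]

lemma pre_Mv_updM1 (ω : Traj M) {r n : ℕ} (hr : r < M.T) (hn : n ≤ r) (a : Bool) :
    pre n (Mv (updM1 ω (idx M r) a)) = pre n (Mv ω) :=
  pre_congr fun s hs => Mv_updM1_lt ω hr (by omega) a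

lemma Mv_updM2_lt (ω : Traj M) {r s : ℕ} (hr : r < M.T) (hs : s < r) (a : Bool) :
    Mv (updM2 ω (idx M r) a) s = Mv ω s := by
  simp only [Mv, M1v_updM2, M2v_updM2_lt ω hr hs a]

lemma pre_Mv_updM2 (ω : Traj M) {r n : ℕ} (hr : r < M.T) (hn : n ≤ r) (a : Bool) :
    pre n (Mv (updM2 ω (idx M r) a)) = pre n (Mv ω) :=
  pre_congr fun s hs => Mv_updM2_lt ω hr (by omega) a


/-- Agreement of two trajectories on all state coordinates up to time `r` and all
decision/observation coordinates strictly before time `r`. -/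
def agl (r : ℕ) (ω ω' : Traj M) : Prop :=
  (∀ s, s ≤ r → X0v ω s = X0v ω' s) ∧ (∀ s, s ≤ r → X1v ω s = X1v ω' s) ∧
  (∀ s, s ≤ r → X2v ω s = X2v ω' s) ∧
  (∀ s, s < r → M1v ω s = M1v ω' s) ∧ (∀ s, s < r → M2v ω s = M2v ω' s) ∧
  (∀ s, s < r → Zv ω s = Zv ω' s) ∧ (∀ s, s < r → Yv ω s = Yv ω' s) ∧
  (∀ s, s < r → U1v ω s = U1v ω' s) ∧ (∀ s, s < r → U2v ω s = U2v ω' s) ∧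
  (∀ s, s < r → UAv ω s = UAv ω' s)

lemma agl_mono {m n : ℕ} (h : m ≤ n) {ω ω' : Traj M} (hagl : agl n ω ω') : agl m ω ω' := by
  obtain ⟨h0, h1, h2, hm1, hm2, hz, hy, hu1, hu2, hua⟩ := hagl
  exact ⟨fun s hs => h0 s (by omega), fun s hs => h1 s (by omega),
    fun s hs => h2 s (by omega), fun s hs => hm1 s (by omega), fun s hs => hm2 s (by omega),
    fun s hs => hz s (by omega), fun s hs => hy s (by omega), fun s hs => hu1 s (by omega),
    fun s hs => hu2 s (by omega), fun s hs => hua s (by omega)⟩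

lemma agl_Mv {n : ℕ} {ω ω' : Traj M} (h : agl n ω ω') {s : ℕ} (hs : s < n) :
    Mv ω s = Mv ω' s := by
  simp only [Mv, h.2.2.2.1 s hs, h.2.2.2.2.1 s hs]


lemma agl_updX0 (ω : Traj M) {r : ℕ} (hr : r + 1 < M.T) (a : M.X0) :
    agl r (updX0 ω (idx M (r+1)) a) ω :=
  ⟨fun s hs => X0v_updX0_lt ω hr (by omega) a,
   fun s _ => rfl,
   fun s _ => rfl,
   fun s _ => rfl,
   fun s _ => rfl,
   fun s _ => rfl,
   fun s _ => rfl,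
   fun s _ => rfl,
   fun s _ => rfl,
   fun s _ => rfl⟩

lemma agl_updX1 (ω : Traj M) {r : ℕ} (hr : r + 1 < M.T) (a : M.X1) :
    agl r (updX1 ω (idx M (r+1)) a) ω :=
  ⟨fun s _ => rfl,
   fun s hs => X1v_updX1_lt ω hr (by omega) a,
   fun s _ => rfl,
   fun s _ => rfl,
   fun s _ => rfl,
   fun s _ => rfl,
   fun s _ => rfl,
   fun s _ => rfl,
   fun s _ => rfl,
   fun s _ => rfl⟩

lemma agl_updX2 (ω : Traj M) {r : ℕ} (hr : r + 1 < M.T) (a : M.X2) :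
    agl r (updX2 ω (idx M (r+1)) a) ω :=
  ⟨fun s _ => rfl,
   fun s _ => rfl,
   fun s hs => X2v_updX2_lt ω hr (by omega) a,
   fun s _ => rfl,
   fun s _ => rfl,
   fun s _ => rfl,
   fun s _ => rfl,
   fun s _ => rfl,
   fun s _ => rfl,
   fun s _ => rfl⟩

lemma agl_updM1 (ω : Traj M) {r : ℕ} (hr : r < M.T) (a : Bool) :
    agl r (updM1 ω (idx M r) a) ω :=
  ⟨fun s _ => rfl,
   fun s _ => rfl,
   fun s _ => rfl,
   fun s hs => M1v_updM1_lt ω hr (by omega) a,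
   fun s _ => rfl,
   fun s _ => rfl,
   fun s _ => rfl,
   fun s _ => rfl,
   fun s _ => rfl,
   fun s _ => rfl⟩

lemma agl_updM2 (ω : Traj M) {r : ℕ} (hr : r < M.T) (a : Bool) :
    agl r (updM2 ω (idx M r) a) ω :=
  ⟨fun s _ => rfl,
   fun s _ => rfl,
   fun s _ => rfl,
   fun s _ => rfl,
   fun s hs => M2v_updM2_lt ω hr (by omega) a,
   fun s _ => rfl,
   fun s _ => rfl,
   fun s _ => rfl,
   fun s _ => rfl,
   fun s _ => rfl⟩

lemma agl_updZ (ω : Traj M) {r : ℕ} (hr : r < M.T) (a : Option (M.X1 × M.X2)) :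
    agl r (updZ ω (idx M r) a) ω :=
  ⟨fun s _ => rfl,
   fun s _ => rfl,
   fun s _ => rfl,
   fun s _ => rfl,
   fun s _ => rfl,
   fun s hs => Zv_updZ_lt ω hr (by omega) a,
   fun s _ => rfl,
   fun s _ => rfl,
   fun s _ => rfl,
   fun s _ => rfl⟩

lemma agl_updY (ω : Traj M) {r : ℕ} (hr : r < M.T) (a : M.Y) :
    agl r (updY ω (idx M r) a) ω :=
  ⟨fun s _ => rfl,
   fun s _ => rfl,
   fun s _ => rfl,
   fun s _ => rfl,
   fun s _ => rfl,
   fun s _ => rfl,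
   fun s hs => Yv_updY_lt ω hr (by omega) a,
   fun s _ => rfl,
   fun s _ => rfl,
   fun s _ => rfl⟩

lemma agl_updU1 (ω : Traj M) {r : ℕ} (hr : r < M.T) (a : M.U1) :
    agl r (updU1 ω (idx M r) a) ω :=
  ⟨fun s _ => rfl,
   fun s _ => rfl,
   fun s _ => rfl,
   fun s _ => rfl,
   fun s _ => rfl,
   fun s _ => rfl,
   fun s _ => rfl,
   fun s hs => U1v_updU1_lt ω hr (by omega) a,
   fun s _ => rfl,
   fun s _ => rfl⟩

lemma agl_updU2 (ω : Traj M) {r : ℕ} (hr : r < M.T) (a : M.U2) :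
    agl r (updU2 ω (idx M r) a) ω :=
  ⟨fun s _ => rfl,
   fun s _ => rfl,
   fun s _ => rfl,
   fun s _ => rfl,
   fun s _ => rfl,
   fun s _ => rfl,
   fun s _ => rfl,
   fun s _ => rfl,
   fun s hs => U2v_updU2_lt ω hr (by omega) a,
   fun s _ => rfl⟩

lemma agl_updUA (ω : Traj M) {r : ℕ} (hr : r < M.T) (a : M.Ua) :
    agl r (updUA ω (idx M r) a) ω :=
  ⟨fun s _ => rfl,
   fun s _ => rfl,
   fun s _ => rfl,
   fun s _ => rfl,
   fun s _ => rfl,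
   fun s _ => rfl,
   fun s _ => rfl,
   fun s _ => rfl,
   fun s _ => rfl,
   fun s hs => UAv_updUA_lt ω hr (by omega) a⟩


end Aux2

end TA


namespace TA

section Aux3

variable {M : Model} {A : Type _}

/-! #### Congruence lemmas for information variables -/

lemma info1_congr {n s : ℕ} (hs : s ≤ n) {ω ω' : Traj M} (h : agl n ω ω') :
    info1 s ω = info1 s ω' := by
  obtain ⟨h0, h1, h2, hm1, hm2, hz, hy, hu1, hu2, hua⟩ := h
  simp only [info1, Prod.mk.injEq]
  exact ⟨pre_congr fun u hu => h0 u (by omega), pre_congr fun u hu => h1 u (by omega),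
    pre_congr fun u hu => hu1 u (by omega),
    pre_congr fun u hu => by simp only [Mv, hm1 u (by omega), hm2 u (by omega)],
    pre_congr fun u hu => hz u (by omega), pre_congr fun u hu => hua u (by omega),
    pre_congr fun u hu => hy u (by omega)⟩

lemma info2_congr {n s : ℕ} (hs : s ≤ n) {ω ω' : Traj M} (h : agl n ω ω') :
    info2 s ω = info2 s ω' := by
  obtain ⟨h0, h1, h2, hm1, hm2, hz, hy, hu1, hu2, hua⟩ := h
  simp only [info2, Prod.mk.injEq]
  exact ⟨pre_congr fun u hu => h0 u (by omega), pre_congr fun u hu => h2 u (by omega),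
    pre_congr fun u hu => hu2 u (by omega),
    pre_congr fun u hu => by simp only [Mv, hm1 u (by omega), hm2 u (by omega)],
    pre_congr fun u hu => hz u (by omega), pre_congr fun u hu => hua u (by omega),
    pre_congr fun u hu => hy u (by omega)⟩

lemma info1p_congr {n s : ℕ} (hs : s < n) {ω ω' : Traj M} (h : agl n ω ω') :
    info1p s ω = info1p s ω' := by
  obtain ⟨h0, h1, h2, hm1, hm2, hz, hy, hu1, hu2, hua⟩ := h
  simp only [info1p, Prod.mk.injEq]
  exact ⟨pre_congr fun u hu => h0 u (by omega), pre_congr fun u hu => h1 u (by omega),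
    pre_congr fun u hu => hu1 u (by omega),
    pre_congr fun u hu => by simp only [Mv, hm1 u (by omega), hm2 u (by omega)],
    pre_congr fun u hu => hz u (by omega), pre_congr fun u hu => hua u (by omega),
    pre_congr fun u hu => hy u (by omega)⟩

lemma info2p_congr {n s : ℕ} (hs : s < n) {ω ω' : Traj M} (h : agl n ω ω') :
    info2p s ω = info2p s ω' := by
  obtain ⟨h0, h1, h2, hm1, hm2, hz, hy, hu1, hu2, hua⟩ := h
  simp only [info2p, Prod.mk.injEq]
  exact ⟨pre_congr fun u hu => h0 u (by omega), pre_congr fun u hu => h2 u (by omega),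
    pre_congr fun u hu => hu2 u (by omega),
    pre_congr fun u hu => by simp only [Mv, hm1 u (by omega), hm2 u (by omega)],
    pre_congr fun u hu => hz u (by omega), pre_congr fun u hu => hua u (by omega),
    pre_congr fun u hu => hy u (by omega)⟩

lemma teamCom_congr {n s : ℕ} (hs : s ≤ n) {ω ω' : Traj M} (h : agl n ω ω') :
    teamCom s ω = teamCom s ω' := by
  obtain ⟨h0, h1, h2, hm1, hm2, hz, hy, hu1, hu2, hua⟩ := h
  simp only [teamCom, Prod.mk.injEq]
  exact ⟨pre_congr fun u hu => h0 u (by omega),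
    pre_congr fun u hu => by simp only [Mv, hm1 u (by omega), hm2 u (by omega)],
    pre_congr fun u hu => hz u (by omega), pre_congr fun u hu => hua u (by omega),
    pre_congr fun u hu => hy u (by omega)⟩

lemma teamComP_congr {n s : ℕ} (hs : s < n) {ω ω' : Traj M} (h : agl n ω ω') :
    teamComP s ω = teamComP s ω' := by
  obtain ⟨h0, h1, h2, hm1, hm2, hz, hy, hu1, hu2, hua⟩ := h
  simp only [teamComP, Prod.mk.injEq]
  exact ⟨pre_congr fun u hu => h0 u (by omega),
    pre_congr fun u hu => by simp only [Mv, hm1 u (by omega), hm2 u (by omega)],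
    pre_congr fun u hu => hz u (by omega), pre_congr fun u hu => hua u (by omega),
    pre_congr fun u hu => hy u (by omega)⟩

/-! #### The factors of the trajectory probability -/

noncomputable def C0f (ω : Traj M) : ℝ :=
  M.init0 (X0v ω 0) * M.init1 (X1v ω 0) * M.init2 (X2v ω 0)

noncomputable def Af1 (σ : TeamStrategy M) (s : ℕ) (ω : Traj M) : ℝ :=
  σ.f1 s (info1 s ω) (M1v ω s)
noncomputable def Af2 (σ : TeamStrategy M) (s : ℕ) (ω : Traj M) : ℝ :=
  σ.f2 s (info2 s ω) (M2v ω s)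
noncomputable def Azk (s : ℕ) (ω : Traj M) : ℝ :=
  zKer M (X0v ω s) (Mv ω s) (X1v ω s, X2v ω s) (Zv ω s)
noncomputable def Aob (s : ℕ) (ω : Traj M) : ℝ :=
  M.obs (Zv ω s) (Mv ω s) (X0v ω s) (Yv ω s)
noncomputable def Ag1 (σ : TeamStrategy M) (s : ℕ) (ω : Traj M) : ℝ :=
  σ.g1 s (info1p s ω) (U1v ω s)
noncomputable def Ag2 (σ : TeamStrategy M) (s : ℕ) (ω : Traj M) : ℝ :=
  σ.g2 s (info2p s ω) (U2v ω s)
noncomputable def Aga (γ : AdvStrategy M A) (iap : ℕ → Traj M → A) (s : ℕ) (ω : Traj M) : ℝ :=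
  γ.ga s (iap s ω) (UAv ω s)

noncomputable def stageF (σ : TeamStrategy M) (γ : AdvStrategy M A)
    (iap : ℕ → Traj M → A) (s : ℕ) (ω : Traj M) : ℝ :=
  Af1 σ s ω * Af2 σ s ω * Azk s ω * Aob s ω * Ag1 σ s ω * Ag2 σ s ω * Aga γ iap s ω

noncomputable def Bt0 (s : ℕ) (ω : Traj M) : ℝ :=
  M.trans0 (X0v ω s) (UAv ω s) (X0v ω (s+1))
noncomputable def Bt1 (s : ℕ) (ω : Traj M) : ℝ :=
  M.trans1 (X0v ω s) (X1v ω s) (U1v ω s) (X1v ω (s+1))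
noncomputable def Bt2 (s : ℕ) (ω : Traj M) : ℝ :=
  M.trans2 (X0v ω s) (X2v ω s) (U2v ω s) (X2v ω (s+1))

noncomputable def transF (s : ℕ) (ω : Traj M) : ℝ :=
  Bt0 s ω * Bt1 s ω * Bt2 s ω

lemma prob_eq (σ : TeamStrategy M) (γ : AdvStrategy M A) (iap : ℕ → Traj M → A)
    (ω : Traj M) :
    prob σ γ iap ω = C0f ω * (∏ s ∈ Finset.range M.T, stageF σ γ iap s ω) *
      ∏ s ∈ Finset.range (M.T - 1), transF s ω := rfl

/-- The adversary's information is a function of the team's common information. -/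
def IapAdapted (iap : ℕ → Traj M → A) : Prop :=
  ∀ (s : ℕ) (ω ω' : Traj M), teamComP s ω = teamComP s ω' → iap s ω = iap s ω'

/-- An event that depends only on the full prefix of the trajectory at the cut `t`. -/
def Prefixed (t : ℕ) (X : Traj M → Prop) : Prop :=
  ∀ ω ω' : Traj M, agl t ω ω' → (X ω ↔ X ω')

lemma C0f_congr {n : ℕ} {ω ω' : Traj M} (h : agl n ω ω') : C0f ω = C0f ω' := by
  simp only [C0f, h.1 0 (by omega), h.2.1 0 (by omega), h.2.2.1 0 (by omega)]

lemma stageF_congr {σ : TeamStrategy M} {γ : AdvStrategy M A} {iap : ℕ → Traj M → A}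
    (hia : IapAdapted iap) {n s : ℕ} (hs : s < n) {ω ω' : Traj M} (h : agl n ω ω') :
    stageF σ γ iap s ω = stageF σ γ iap s ω' := by
  have hI1 := info1_congr (n := n) (s := s) (by omega) h
  have hI2 := info2_congr (n := n) (s := s) (by omega) h
  have hI1p := info1p_congr (n := n) (s := s) hs h
  have hI2p := info2p_congr (n := n) (s := s) hs h
  have hga : iap s ω = iap s ω' := hia s _ _ (teamComP_congr hs h)
  have hMv := agl_Mv h hs
  obtain ⟨h0, h1, h2, hm1, hm2, hz, hy, hu1, hu2, hua⟩ := h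
  simp only [stageF, Af1, Af2, Azk, Aob, Ag1, Ag2, Aga, hI1, hI2, hI1p, hI2p, hga, hMv,
    h0 s (by omega), h1 s (by omega), h2 s (by omega), hm1 s hs, hm2 s hs, hz s hs,
    hy s hs, hu1 s hs, hu2 s hs, hua s hs]

lemma transF_congr {n s : ℕ} (hs : s < n) {ω ω' : Traj M} (h : agl n ω ω') :
    transF s ω = transF s ω' := by
  obtain ⟨h0, h1, h2, hm1, hm2, hz, hy, hu1, hu2, hua⟩ := h
  simp only [transF, Bt0, Bt1, Bt2, h0 s (by omega), h0 (s+1) (by omega),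
    h1 s (by omega), h1 (s+1) (by omega), h2 s (by omega), h2 (s+1) (by omega),
    hu1 s hs, hu2 s hs, hua s hs]

/-- Truncation of the trajectory probability at the cut `n`, multiplied by the
indicator of the event `X`. -/
noncomputable def core (σ : TeamStrategy M) (γ : AdvStrategy M A) (iap : ℕ → Traj M → A)
    (X : Traj M → Prop) (n : ℕ) (ω : Traj M) : ℝ :=
  (if X ω then 1 else 0) * C0f ω * (∏ s ∈ Finset.range n, stageF σ γ iap s ω) *
    ∏ s ∈ Finset.range n, transF s ω

lemma core_congr {σ : TeamStrategy M} {γ : AdvStrategy M A} {iap : ℕ → Traj M → A}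
    (hia : IapAdapted iap) {t n : ℕ} (ht : t ≤ n) {X : Traj M → Prop}
    (hX : Prefixed t X) {ω ω' : Traj M} (h : agl n ω ω') :
    core σ γ iap X n ω = core σ γ iap X n ω' := by
  have hXe : X ω ↔ X ω' := hX _ _ (agl_mono ht h)
  have hite : (if X ω then (1:ℝ) else 0) = if X ω' then 1 else 0 := by
    by_cases hx : X ω
    · rw [if_pos hx, if_pos (hXe.mp hx)]
    · rw [if_neg hx, if_neg (fun hx' => hx (hXe.mpr hx'))]
  simp only [core]
  rw [hite, C0f_congr h,
    Finset.prod_congr rfl (fun s hs => stageF_congr hia (Finset.mem_range.mp hs) h),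
    Finset.prod_congr rfl (fun s hs => transF_congr (Finset.mem_range.mp hs) h)]

lemma zKer_sum (x0 : M.X0) (m : Bool × Bool) (x : M.X1 × M.X2) :
    ∑ z, zKer M x0 m x z = 1 := by
  rcases eq_or_ne m (false, false) with hm | hm
  · simp [zKer, hm, Fintype.sum_option]
  · simp [zKer, hm, Fintype.sum_option, Finset.sum_ite_eq']

end Aux3

end TA

namespace TA

section Aux4

variable {M : Model}


@[simp] lemma info1_updU2 (s : ℕ) (ω : Traj M) (j : Fin M.T) (a : M.U2) :
    info1 s (updU2 ω j a) = info1 s ω := rfl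

@[simp] lemma info1p_updU2 (s : ℕ) (ω : Traj M) (j : Fin M.T) (a : M.U2) :
    info1p s (updU2 ω j a) = info1p s ω := rfl

@[simp] lemma info2_updU1 (s : ℕ) (ω : Traj M) (j : Fin M.T) (a : M.U1) :
    info2 s (updU1 ω j a) = info2 s ω := rfl

@[simp] lemma info2p_updU1 (s : ℕ) (ω : Traj M) (j : Fin M.T) (a : M.U1) :
    info2p s (updU1 ω j a) = info2p s ω := rfl

@[simp] lemma teamComP_updU2 (s : ℕ) (ω : Traj M) (j : Fin M.T) (a : M.U2) :
    teamComP s (updU2 ω j a) = teamComP s ω := rfl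

@[simp] lemma teamComP_updU1 (s : ℕ) (ω : Traj M) (j : Fin M.T) (a : M.U1) :
    teamComP s (updU1 ω j a) = teamComP s ω := rfl

@[simp] lemma teamComP_updX1 (s : ℕ) (ω : Traj M) (j : Fin M.T) (a : M.X1) :
    teamComP s (updX1 ω j a) = teamComP s ω := rfl

@[simp] lemma teamComP_updX2 (s : ℕ) (ω : Traj M) (j : Fin M.T) (a : M.X2) :
    teamComP s (updX2 ω j a) = teamComP s ω := rfl

@[simp] lemma info1_updX2 (s : ℕ) (ω : Traj M) (j : Fin M.T) (a : M.X2) :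
    info1 s (updX2 ω j a) = info1 s ω := rfl

@[simp] lemma info1p_updX2 (s : ℕ) (ω : Traj M) (j : Fin M.T) (a : M.X2) :
    info1p s (updX2 ω j a) = info1p s ω := rfl

@[simp] lemma info2_updX1 (s : ℕ) (ω : Traj M) (j : Fin M.T) (a : M.X1) :
    info2 s (updX1 ω j a) = info2 s ω := rfl

@[simp] lemma info2p_updX1 (s : ℕ) (ω : Traj M) (j : Fin M.T) (a : M.X1) :
    info2p s (updX1 ω j a) = info2p s ω := rfl

lemma info1_updUA (ω : Traj M) {r s : ℕ} (hr : r < M.T) (hs : s ≤ r) (a : M.Ua) :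
    info1 s (updUA ω (idx M r) a) = info1 s ω := by
  simp [info1, pre_UAv_updUA ω hr (show s ≤ r by omega) a]

lemma info2_updUA (ω : Traj M) {r s : ℕ} (hr : r < M.T) (hs : s ≤ r) (a : M.Ua) :
    info2 s (updUA ω (idx M r) a) = info2 s ω := by
  simp [info2, pre_UAv_updUA ω hr (show s ≤ r by omega) a]

lemma info1p_updUA (ω : Traj M) {r s : ℕ} (hr : r < M.T) (hs : s ≤ r) (a : M.Ua) :
    info1p s (updUA ω (idx M r) a) = info1p s ω := by
  simp [info1p, pre_UAv_updUA ω hr (show s ≤ r by omega) a]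

lemma info2p_updUA (ω : Traj M) {r s : ℕ} (hr : r < M.T) (hs : s ≤ r) (a : M.Ua) :
    info2p s (updUA ω (idx M r) a) = info2p s ω := by
  simp [info2p, pre_UAv_updUA ω hr (show s ≤ r by omega) a]

lemma teamComP_updUA (ω : Traj M) {r s : ℕ} (hr : r < M.T) (hs : s ≤ r) (a : M.Ua) :
    teamComP s (updUA ω (idx M r) a) = teamComP s ω := by
  simp [teamComP, pre_UAv_updUA ω hr (show s ≤ r by omega) a]

lemma info2_updU2 (ω : Traj M) {r s : ℕ} (hr : r < M.T) (hs : s ≤ r) (a : M.U2) :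
    info2 s (updU2 ω (idx M r) a) = info2 s ω := by
  simp [info2, pre_U2v_updU2 ω hr (show s ≤ r by omega) a]

lemma info2p_updU2 (ω : Traj M) {r s : ℕ} (hr : r < M.T) (hs : s ≤ r) (a : M.U2) :
    info2p s (updU2 ω (idx M r) a) = info2p s ω := by
  simp [info2p, pre_U2v_updU2 ω hr (show s ≤ r by omega) a]

lemma info1_updU1 (ω : Traj M) {r s : ℕ} (hr : r < M.T) (hs : s ≤ r) (a : M.U1) :
    info1 s (updU1 ω (idx M r) a) = info1 s ω := by
  simp [info1, pre_U1v_updU1 ω hr (show s ≤ r by omega) a]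

lemma info1p_updU1 (ω : Traj M) {r s : ℕ} (hr : r < M.T) (hs : s ≤ r) (a : M.U1) :
    info1p s (updU1 ω (idx M r) a) = info1p s ω := by
  simp [info1p, pre_U1v_updU1 ω hr (show s ≤ r by omega) a]

lemma info1_updY (ω : Traj M) {r s : ℕ} (hr : r < M.T) (hs : s ≤ r) (a : M.Y) :
    info1 s (updY ω (idx M r) a) = info1 s ω := by
  simp [info1, pre_Yv_updY ω hr (show s ≤ r by omega) a]

lemma info2_updY (ω : Traj M) {r s : ℕ} (hr : r < M.T) (hs : s ≤ r) (a : M.Y) :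
    info2 s (updY ω (idx M r) a) = info2 s ω := by
  simp [info2, pre_Yv_updY ω hr (show s ≤ r by omega) a]

lemma info1_updZ (ω : Traj M) {r s : ℕ} (hr : r < M.T) (hs : s ≤ r) (a : Option (M.X1 × M.X2)) :
    info1 s (updZ ω (idx M r) a) = info1 s ω := by
  simp [info1, pre_Zv_updZ ω hr (show s ≤ r by omega) a]

lemma info2_updZ (ω : Traj M) {r s : ℕ} (hr : r < M.T) (hs : s ≤ r) (a : Option (M.X1 × M.X2)) :
    info2 s (updZ ω (idx M r) a) = info2 s ω := by
  simp [info2, pre_Zv_updZ ω hr (show s ≤ r by omega) a]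

lemma info1_updM2 (ω : Traj M) {r s : ℕ} (hr : r < M.T) (hs : s ≤ r) (a : Bool) :
    info1 s (updM2 ω (idx M r) a) = info1 s ω := by
  simp [info1, pre_Mv_updM2 ω hr (show s ≤ r by omega) a]

lemma info2_updX2 (ω : Traj M) {r s : ℕ} (hr : r < M.T) (hs : s < r) (a : M.X2) :
    info2 s (updX2 ω (idx M r) a) = info2 s ω := by
  simp [info2, pre_X2v_updX2 ω hr (show s+1 ≤ r by omega) a]

lemma info2p_updX2 (ω : Traj M) {r s : ℕ} (hr : r < M.T) (hs : s < r) (a : M.X2) :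
    info2p s (updX2 ω (idx M r) a) = info2p s ω := by
  simp [info2p, pre_X2v_updX2 ω hr (show s+1 ≤ r by omega) a]

lemma info1_updX1 (ω : Traj M) {r s : ℕ} (hr : r < M.T) (hs : s < r) (a : M.X1) :
    info1 s (updX1 ω (idx M r) a) = info1 s ω := by
  simp [info1, pre_X1v_updX1 ω hr (show s+1 ≤ r by omega) a]

lemma info1p_updX1 (ω : Traj M) {r s : ℕ} (hr : r < M.T) (hs : s < r) (a : M.X1) :
    info1p s (updX1 ω (idx M r) a) = info1p s ω := by
  simp [info1p, pre_X1v_updX1 ω hr (show s+1 ≤ r by omega) a]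

lemma info1_updX0 (ω : Traj M) {r s : ℕ} (hr : r < M.T) (hs : s < r) (a : M.X0) :
    info1 s (updX0 ω (idx M r) a) = info1 s ω := by
  simp [info1, pre_X0v_updX0 ω hr (show s+1 ≤ r by omega) a]

lemma info2_updX0 (ω : Traj M) {r s : ℕ} (hr : r < M.T) (hs : s < r) (a : M.X0) :
    info2 s (updX0 ω (idx M r) a) = info2 s ω := by
  simp [info2, pre_X0v_updX0 ω hr (show s+1 ≤ r by omega) a]

lemma info1p_updX0 (ω : Traj M) {r s : ℕ} (hr : r < M.T) (hs : s < r) (a : M.X0) :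
    info1p s (updX0 ω (idx M r) a) = info1p s ω := by
  simp [info1p, pre_X0v_updX0 ω hr (show s+1 ≤ r by omega) a]

lemma info2p_updX0 (ω : Traj M) {r s : ℕ} (hr : r < M.T) (hs : s < r) (a : M.X0) :
    info2p s (updX0 ω (idx M r) a) = info2p s ω := by
  simp [info2p, pre_X0v_updX0 ω hr (show s+1 ≤ r by omega) a]

lemma teamComP_updX0 (ω : Traj M) {r s : ℕ} (hr : r < M.T) (hs : s < r) (a : M.X0) :
    teamComP s (updX0 ω (idx M r) a) = teamComP s ω := by
  simp [teamComP, pre_X0v_updX0 ω hr (show s+1 ≤ r by omega) a]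


@[simp] lemma Bt0_updX2 (s : ℕ) (ω : Traj M) (j : Fin M.T) (a : M.X2) :
    Bt0 s (updX2 ω j a) = Bt0 s ω := rfl
@[simp] lemma Bt1_updX2 (s : ℕ) (ω : Traj M) (j : Fin M.T) (a : M.X2) :
    Bt1 s (updX2 ω j a) = Bt1 s ω := rfl
@[simp] lemma Bt0_updX1 (s : ℕ) (ω : Traj M) (j : Fin M.T) (a : M.X1) :
    Bt0 s (updX1 ω j a) = Bt0 s ω := rfl

end Aux4

end TA

namespace TA

section Elim

variable {M : Model} {A : Type _} {σ : TeamStrategy M} {γ : AdvStrategy M A}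
  {iap : ℕ → Traj M → A}

lemma info2_updM2 (ω : Traj M) {r s : ℕ} (hr : r < M.T) (hs : s ≤ r) (a : Bool) :
    info2 s (updM2 ω (idx M r) a) = info2 s ω := by
  simp [info2, pre_Mv_updM2 ω hr (show s ≤ r by omega) a]

lemma info1_updM1 (ω : Traj M) {r s : ℕ} (hr : r < M.T) (hs : s ≤ r) (a : Bool) :
    info1 s (updM1 ω (idx M r) a) = info1 s ω := by
  simp [info1, pre_Mv_updM1 ω hr (show s ≤ r by omega) a]

lemma elimA (hia : IapAdapted iap) {t n : ℕ} {X : Traj M → Prop} (hX : Prefixed t X)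
    (ht : t ≤ n) (hn : n < M.T) :
    (Fintype.card Bool : ℝ) * ((Fintype.card Bool : ℝ) * ((Fintype.card (Option (M.X1 × M.X2)) : ℝ) * ((Fintype.card M.Y : ℝ) * ((Fintype.card M.U1 : ℝ) * ((Fintype.card M.U2 : ℝ) * (Fintype.card M.Ua : ℝ)))))) *
      ∑ ω : Traj M, core σ γ iap X n ω * stageF σ γ iap n ω
      = ∑ ω : Traj M, core σ γ iap X n ω := by
  have e0 : (∑ ω : Traj M, core σ γ iap X n ω * stageF σ γ iap n ω)
      = ∑ ω : Traj M, core σ γ iap X n ω * Af1 σ n ω * Af2 σ n ω * Azk n ω * Aob n ω * Ag1 σ n ω * Ag2 σ n ω * Aga γ iap n ω :=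
    Finset.sum_congr rfl fun ω _ => by simp only [stageF]; ring
  have h7 : (Fintype.card M.Ua : ℝ) *
      (∑ ω : Traj M, core σ γ iap X n ω * Af1 σ n ω * Af2 σ n ω * Azk n ω * Aob n ω * Ag1 σ n ω * Ag2 σ n ω * Aga γ iap n ω)
      = ∑ ω : Traj M, core σ γ iap X n ω * Af1 σ n ω * Af2 σ n ω * Azk n ω * Aob n ω * Ag1 σ n ω * Ag2 σ n ω :=
    split_sum (fun ω a => updUA ω (idx M n) a) (fun ω => UAv ω n)
      (fun ω a => UAv_updUA_self ω n a)
      (fun ω => by simp [updUA, UAv, Function.update_eq_self])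
      (fun ω a b => by simp [updUA, Function.update_idem])
      _ _
      (fun ω a => by
        simp only [info1_updU2, info1p_updU2, info2_updU1, info2p_updU1, teamComP_updU2, teamComP_updU1, teamComP_updX1, teamComP_updX2, info1_updX2, info1p_updX2, info2_updX1, info2p_updX1, Af1, Af2, Azk, Aob, Ag1, Ag2, Aga, core_congr hia ht hX (agl_updUA ω hn a), info1_updUA ω hn le_rfl a, info2_updUA ω hn le_rfl a, info1p_updUA ω hn le_rfl a, info2p_updUA ω hn le_rfl a, X0v_updUA, X1v_updUA, X2v_updUA, M1v_updUA, M2v_updUA, Mv_updUA, Zv_updUA, Yv_updUA, U1v_updUA, U2v_updUA])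
      (fun ω => by
        have hh : ∀ a' : M.Ua, Aga γ iap n (updUA ω (idx M n) a') = γ.ga n (iap n ω) a' :=
          fun a' => by simp only [Aga, UAv_updUA_self, hia n (updUA ω (idx M n) a') ω (teamComP_updUA ω hn le_rfl a')]
        rw [Finset.sum_congr rfl fun a' _ => hh a']
        exact γ.ga_sum n (iap n ω))
  have h6 : (Fintype.card M.U2 : ℝ) *
      (∑ ω : Traj M, core σ γ iap X n ω * Af1 σ n ω * Af2 σ n ω * Azk n ω * Aob n ω * Ag1 σ n ω * Ag2 σ n ω)
      = ∑ ω : Traj M, core σ γ iap X n ω * Af1 σ n ω * Af2 σ n ω * Azk n ω * Aob n ω * Ag1 σ n ω :=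
    split_sum (fun ω a => updU2 ω (idx M n) a) (fun ω => U2v ω n)
      (fun ω a => U2v_updU2_self ω n a)
      (fun ω => by simp [updU2, U2v, Function.update_eq_self])
      (fun ω a b => by simp [updU2, Function.update_idem])
      _ _
      (fun ω a => by
        simp only [info1_updU2, info1p_updU2, info2_updU1, info2p_updU1, teamComP_updU2, teamComP_updU1, teamComP_updX1, teamComP_updX2, info1_updX2, info1p_updX2, info2_updX1, info2p_updX1, Af1, Af2, Azk, Aob, Ag1, Ag2, Aga, core_congr hia ht hX (agl_updU2 ω hn a), info2_updU2 ω hn le_rfl a, X0v_updU2, X1v_updU2, X2v_updU2, M1v_updU2, M2v_updU2, Mv_updU2, Zv_updU2, Yv_updU2, U1v_updU2, UAv_updU2])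
      (fun ω => by
        have hh : ∀ a' : M.U2, Ag2 σ n (updU2 ω (idx M n) a') = σ.g2 n (info2p n ω) a' :=
          fun a' => by simp only [Ag2, U2v_updU2_self, info2p_updU2 ω hn le_rfl a']
        rw [Finset.sum_congr rfl fun a' _ => hh a']
        exact σ.g2_sum n (info2p n ω))
  have h5 : (Fintype.card M.U1 : ℝ) *
      (∑ ω : Traj M, core σ γ iap X n ω * Af1 σ n ω * Af2 σ n ω * Azk n ω * Aob n ω * Ag1 σ n ω)
      = ∑ ω : Traj M, core σ γ iap X n ω * Af1 σ n ω * Af2 σ n ω * Azk n ω * Aob n ω :=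
    split_sum (fun ω a => updU1 ω (idx M n) a) (fun ω => U1v ω n)
      (fun ω a => U1v_updU1_self ω n a)
      (fun ω => by simp [updU1, U1v, Function.update_eq_self])
      (fun ω a b => by simp [updU1, Function.update_idem])
      _ _
      (fun ω a => by
        simp only [info1_updU2, info1p_updU2, info2_updU1, info2p_updU1, teamComP_updU2, teamComP_updU1, teamComP_updX1, teamComP_updX2, info1_updX2, info1p_updX2, info2_updX1, info2p_updX1, Af1, Af2, Azk, Aob, Ag1, Ag2, Aga, core_congr hia ht hX (agl_updU1 ω hn a), info1_updU1 ω hn le_rfl a, X0v_updU1, X1v_updU1, X2v_updU1, M1v_updU1, M2v_updU1, Mv_updU1, Zv_updU1, Yv_updU1, U2v_updU1, UAv_updU1])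
      (fun ω => by
        have hh : ∀ a' : M.U1, Ag1 σ n (updU1 ω (idx M n) a') = σ.g1 n (info1p n ω) a' :=
          fun a' => by simp only [Ag1, U1v_updU1_self, info1p_updU1 ω hn le_rfl a']
        rw [Finset.sum_congr rfl fun a' _ => hh a']
        exact σ.g1_sum n (info1p n ω))
  have h4 : (Fintype.card M.Y : ℝ) *
      (∑ ω : Traj M, core σ γ iap X n ω * Af1 σ n ω * Af2 σ n ω * Azk n ω * Aob n ω)
      = ∑ ω : Traj M, core σ γ iap X n ω * Af1 σ n ω * Af2 σ n ω * Azk n ω :=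
    split_sum (fun ω a => updY ω (idx M n) a) (fun ω => Yv ω n)
      (fun ω a => Yv_updY_self ω n a)
      (fun ω => by simp [updY, Yv, Function.update_eq_self])
      (fun ω a b => by simp [updY, Function.update_idem])
      _ _
      (fun ω a => by
        simp only [info1_updU2, info1p_updU2, info2_updU1, info2p_updU1, teamComP_updU2, teamComP_updU1, teamComP_updX1, teamComP_updX2, info1_updX2, info1p_updX2, info2_updX1, info2p_updX1, Af1, Af2, Azk, Aob, Ag1, Ag2, Aga, core_congr hia ht hX (agl_updY ω hn a), info1_updY ω hn le_rfl a, info2_updY ω hn le_rfl a, X0v_updY, X1v_updY, X2v_updY, M1v_updY, M2v_updY, Mv_updY, Zv_updY, U1v_updY, U2v_updY, UAv_updY])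
      (fun ω => by
        have hh : ∀ a' : M.Y, Aob n (updY ω (idx M n) a') = M.obs (Zv ω n) (Mv ω n) (X0v ω n) a' :=
          fun a' => by simp only [Aob, Yv_updY_self, Zv_updY, Mv_updY, X0v_updY]
        rw [Finset.sum_congr rfl fun a' _ => hh a']
        exact M.obs_sum (Zv ω n) (Mv ω n) (X0v ω n))
  have h3 : (Fintype.card (Option (M.X1 × M.X2)) : ℝ) *
      (∑ ω : Traj M, core σ γ iap X n ω * Af1 σ n ω * Af2 σ n ω * Azk n ω)
      = ∑ ω : Traj M, core σ γ iap X n ω * Af1 σ n ω * Af2 σ n ω :=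
    split_sum (fun ω a => updZ ω (idx M n) a) (fun ω => Zv ω n)
      (fun ω a => Zv_updZ_self ω n a)
      (fun ω => by simp [updZ, Zv, Function.update_eq_self])
      (fun ω a b => by simp [updZ, Function.update_idem])
      _ _
      (fun ω a => by
        simp only [info1_updU2, info1p_updU2, info2_updU1, info2p_updU1, teamComP_updU2, teamComP_updU1, teamComP_updX1, teamComP_updX2, info1_updX2, info1p_updX2, info2_updX1, info2p_updX1, Af1, Af2, Azk, Aob, Ag1, Ag2, Aga, core_congr hia ht hX (agl_updZ ω hn a), info1_updZ ω hn le_rfl a, info2_updZ ω hn le_rfl a, X0v_updZ, X1v_updZ, X2v_updZ, M1v_updZ, M2v_updZ, Mv_updZ, Yv_updZ, U1v_updZ, U2v_updZ, UAv_updZ])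
      (fun ω => by
        have hh : ∀ a' : Option (M.X1 × M.X2), Azk n (updZ ω (idx M n) a') = zKer M (X0v ω n) (Mv ω n) (X1v ω n, X2v ω n) a' :=
          fun a' => by simp only [Azk, Zv_updZ_self, X0v_updZ, Mv_updZ, X1v_updZ, X2v_updZ]
        rw [Finset.sum_congr rfl fun a' _ => hh a']
        exact zKer_sum (X0v ω n) (Mv ω n) (X1v ω n, X2v ω n))
  have h2 : (Fintype.card Bool : ℝ) *
      (∑ ω : Traj M, core σ γ iap X n ω * Af1 σ n ω * Af2 σ n ω)
      = ∑ ω : Traj M, core σ γ iap X n ω * Af1 σ n ω :=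
    split_sum (fun ω a => updM2 ω (idx M n) a) (fun ω => M2v ω n)
      (fun ω a => M2v_updM2_self ω n a)
      (fun ω => by simp [updM2, M2v, Function.update_eq_self])
      (fun ω a b => by simp [updM2, Function.update_idem])
      _ _
      (fun ω a => by
        simp only [info1_updU2, info1p_updU2, info2_updU1, info2p_updU1, teamComP_updU2, teamComP_updU1, teamComP_updX1, teamComP_updX2, info1_updX2, info1p_updX2, info2_updX1, info2p_updX1, Af1, Af2, Azk, Aob, Ag1, Ag2, Aga, core_congr hia ht hX (agl_updM2 ω hn a), info1_updM2 ω hn le_rfl a, X0v_updM2, X1v_updM2, X2v_updM2, M1v_updM2, Zv_updM2, Yv_updM2, U1v_updM2, U2v_updM2, UAv_updM2])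
      (fun ω => by
        have hh : ∀ a' : Bool, Af2 σ n (updM2 ω (idx M n) a') = σ.f2 n (info2 n ω) a' :=
          fun a' => by simp only [Af2, M2v_updM2_self, info2_updM2 ω hn le_rfl a']
        rw [Finset.sum_congr rfl fun a' _ => hh a']
        exact σ.f2_sum n (info2 n ω))
  have h1 : (Fintype.card Bool : ℝ) *
      (∑ ω : Traj M, core σ γ iap X n ω * Af1 σ n ω)
      = ∑ ω : Traj M, core σ γ iap X n ω :=
    split_sum (fun ω a => updM1 ω (idx M n) a) (fun ω => M1v ω n)
      (fun ω a => M1v_updM1_self ω n a)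
      (fun ω => by simp [updM1, M1v, Function.update_eq_self])
      (fun ω a b => by simp [updM1, Function.update_idem])
      _ _
      (fun ω a => by
        simp only [info1_updU2, info1p_updU2, info2_updU1, info2p_updU1, teamComP_updU2, teamComP_updU1, teamComP_updX1, teamComP_updX2, info1_updX2, info1p_updX2, info2_updX1, info2p_updX1, Af1, Af2, Azk, Aob, Ag1, Ag2, Aga, core_congr hia ht hX (agl_updM1 ω hn a), X0v_updM1, X1v_updM1, X2v_updM1, M2v_updM1, Zv_updM1, Yv_updM1, U1v_updM1, U2v_updM1, UAv_updM1])
      (fun ω => by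
        have hh : ∀ a' : Bool, Af1 σ n (updM1 ω (idx M n) a') = σ.f1 n (info1 n ω) a' :=
          fun a' => by simp only [Af1, M1v_updM1_self, info1_updM1 ω hn le_rfl a']
        rw [Finset.sum_congr rfl fun a' _ => hh a']
        exact σ.f1_sum n (info1 n ω))
  calc (Fintype.card Bool : ℝ) * ((Fintype.card Bool : ℝ) * ((Fintype.card (Option (M.X1 × M.X2)) : ℝ) * ((Fintype.card M.Y : ℝ) * ((Fintype.card M.U1 : ℝ) * ((Fintype.card M.U2 : ℝ) * (Fintype.card M.Ua : ℝ)))))) *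
      ∑ ω : Traj M, core σ γ iap X n ω * stageF σ γ iap n ω
      = (Fintype.card Bool : ℝ) * ((Fintype.card Bool : ℝ) * ((Fintype.card (Option (M.X1 × M.X2)) : ℝ) * ((Fintype.card M.Y : ℝ) * ((Fintype.card M.U1 : ℝ) * ((Fintype.card M.U2 : ℝ) * ((Fintype.card M.Ua : ℝ) * (∑ ω : Traj M, core σ γ iap X n ω * Af1 σ n ω * Af2 σ n ω * Azk n ω * Aob n ω * Ag1 σ n ω * Ag2 σ n ω * Aga γ iap n ω))))))) := by rw [e0]; ring
    _ = (Fintype.card Bool : ℝ) * ((Fintype.card Bool : ℝ) * ((Fintype.card (Option (M.X1 × M.X2)) : ℝ) * ((Fintype.card M.Y : ℝ) * ((Fintype.card M.U1 : ℝ) * ((Fintype.card M.U2 : ℝ) * (∑ ω : Traj M, core σ γ iap X n ω * Af1 σ n ω * Af2 σ n ω * Azk n ω * Aob n ω * Ag1 σ n ω * Ag2 σ n ω)))))) := by rw [h7]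
    _ = (Fintype.card Bool : ℝ) * ((Fintype.card Bool : ℝ) * ((Fintype.card (Option (M.X1 × M.X2)) : ℝ) * ((Fintype.card M.Y : ℝ) * ((Fintype.card M.U1 : ℝ) * (∑ ω : Traj M, core σ γ iap X n ω * Af1 σ n ω * Af2 σ n ω * Azk n ω * Aob n ω * Ag1 σ n ω))))) := by rw [h6]
    _ = (Fintype.card Bool : ℝ) * ((Fintype.card Bool : ℝ) * ((Fintype.card (Option (M.X1 × M.X2)) : ℝ) * ((Fintype.card M.Y : ℝ) * (∑ ω : Traj M, core σ γ iap X n ω * Af1 σ n ω * Af2 σ n ω * Azk n ω * Aob n ω)))) := by rw [h5]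
    _ = (Fintype.card Bool : ℝ) * ((Fintype.card Bool : ℝ) * ((Fintype.card (Option (M.X1 × M.X2)) : ℝ) * (∑ ω : Traj M, core σ γ iap X n ω * Af1 σ n ω * Af2 σ n ω * Azk n ω))) := by rw [h4]
    _ = (Fintype.card Bool : ℝ) * ((Fintype.card Bool : ℝ) * (∑ ω : Traj M, core σ γ iap X n ω * Af1 σ n ω * Af2 σ n ω)) := by rw [h3]
    _ = (Fintype.card Bool : ℝ) * (∑ ω : Traj M, core σ γ iap X n ω * Af1 σ n ω) := by rw [h2]
    _ = ∑ ω : Traj M, core σ γ iap X n ω := by rw [h1]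

end Elim

end TA

namespace TA

section ElimB

variable {M : Model} {A : Type _} {σ : TeamStrategy M} {γ : AdvStrategy M A}
  {iap : ℕ → Traj M → A}

lemma elimB (hia : IapAdapted iap) {t n : ℕ} {X : Traj M → Prop} (hX : Prefixed t X)
    (ht : t ≤ n) (hn : n + 1 < M.T) :
    (Fintype.card M.X0 : ℝ) * ((Fintype.card M.X1 : ℝ) * (Fintype.card M.X2 : ℝ)) *
      ∑ ω : Traj M, core σ γ iap X n ω * stageF σ γ iap n ω * transF n ω
      = ∑ ω : Traj M, core σ γ iap X n ω * stageF σ γ iap n ω := by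
  have e0 : (∑ ω : Traj M, core σ γ iap X n ω * stageF σ γ iap n ω * transF n ω)
      = ∑ ω : Traj M, core σ γ iap X n ω * stageF σ γ iap n ω * Bt0 n ω * Bt1 n ω * Bt2 n ω :=
    Finset.sum_congr rfl fun ω _ => by simp only [transF]; ring
  have hb3 : (Fintype.card M.X2 : ℝ) *
      (∑ ω : Traj M, core σ γ iap X n ω * stageF σ γ iap n ω * Bt0 n ω * Bt1 n ω * Bt2 n ω)
      = ∑ ω : Traj M, core σ γ iap X n ω * stageF σ γ iap n ω * Bt0 n ω * Bt1 n ω :=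
    split_sum (fun ω a => updX2 ω (idx M (n+1)) a) (fun ω => X2v ω (n+1))
      (fun ω a => X2v_updX2_self ω (n+1) a)
      (fun ω => by simp [updX2, X2v, Function.update_eq_self])
      (fun ω a b => by simp [updX2, Function.update_idem])
      _ _
      (fun ω a => by
        simp only [info1_updU2, info1p_updU2, info2_updU1, info2p_updU1, teamComP_updU2, teamComP_updU1, teamComP_updX1, teamComP_updX2, info1_updX2, info1p_updX2, info2_updX1, info2p_updX1, Bt0_updX2, Bt1_updX2, Bt0_updX1, stageF, Af1, Af2, Azk, Aob, Ag1, Ag2, Aga, core_congr hia ht hX (agl_updX2 ω hn a), info2_updX2 ω hn (show n < n + 1 by omega) a, info2p_updX2 ω hn (show n < n + 1 by omega) a, X2v_updX2_lt ω hn (show n < n + 1 by omega) a, hia n (updX2 ω (idx M (n+1)) a) ω (teamComP_updX2 n ω (idx M (n+1)) a), X0v_updX2, X1v_updX2, M1v_updX2, M2v_updX2, Mv_updX2, Zv_updX2, Yv_updX2, U1v_updX2, U2v_updX2, UAv_updX2])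
      (fun ω => by
        have hh : ∀ a' : M.X2, Bt2 n (updX2 ω (idx M (n+1)) a') = M.trans2 (X0v ω n) (X2v ω n) (U2v ω n) a' :=
          fun a' => by simp only [Bt2, X0v_updX2, U2v_updX2, X2v_updX2_lt ω hn (show n < n + 1 by omega) a', X2v_updX2_self]
        rw [Finset.sum_congr rfl fun a' _ => hh a']
        exact M.trans2_sum (X0v ω n) (X2v ω n) (U2v ω n))
  have hb2 : (Fintype.card M.X1 : ℝ) *
      (∑ ω : Traj M, core σ γ iap X n ω * stageF σ γ iap n ω * Bt0 n ω * Bt1 n ω)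
      = ∑ ω : Traj M, core σ γ iap X n ω * stageF σ γ iap n ω * Bt0 n ω :=
    split_sum (fun ω a => updX1 ω (idx M (n+1)) a) (fun ω => X1v ω (n+1))
      (fun ω a => X1v_updX1_self ω (n+1) a)
      (fun ω => by simp [updX1, X1v, Function.update_eq_self])
      (fun ω a b => by simp [updX1, Function.update_idem])
      _ _
      (fun ω a => by
        simp only [info1_updU2, info1p_updU2, info2_updU1, info2p_updU1, teamComP_updU2, teamComP_updU1, teamComP_updX1, teamComP_updX2, info1_updX2, info1p_updX2, info2_updX1, info2p_updX1, Bt0_updX2, Bt1_updX2, Bt0_updX1, stageF, Af1, Af2, Azk, Aob, Ag1, Ag2, Aga, core_congr hia ht hX (agl_updX1 ω hn a), info1_updX1 ω hn (show n < n + 1 by omega) a, info1p_updX1 ω hn (show n < n + 1 by omega) a, X1v_updX1_lt ω hn (show n < n + 1 by omega) a, hia n (updX1 ω (idx M (n+1)) a) ω (teamComP_updX1 n ω (idx M (n+1)) a), X0v_updX1, X2v_updX1, M1v_updX1, M2v_updX1, Mv_updX1, Zv_updX1, Yv_updX1, U1v_updX1, U2v_updX1, UAv_updX1])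
      (fun ω => by
        have hh : ∀ a' : M.X1, Bt1 n (updX1 ω (idx M (n+1)) a') = M.trans1 (X0v ω n) (X1v ω n) (U1v ω n) a' :=
          fun a' => by simp only [Bt1, X0v_updX1, U1v_updX1, X1v_updX1_lt ω hn (show n < n + 1 by omega) a', X1v_updX1_self]
        rw [Finset.sum_congr rfl fun a' _ => hh a']
        exact M.trans1_sum (X0v ω n) (X1v ω n) (U1v ω n))
  have hb1 : (Fintype.card M.X0 : ℝ) *
      (∑ ω : Traj M, core σ γ iap X n ω * stageF σ γ iap n ω * Bt0 n ω)
      = ∑ ω : Traj M, core σ γ iap X n ω * stageF σ γ iap n ω :=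
    split_sum (fun ω a => updX0 ω (idx M (n+1)) a) (fun ω => X0v ω (n+1))
      (fun ω a => X0v_updX0_self ω (n+1) a)
      (fun ω => by simp [updX0, X0v, Function.update_eq_self])
      (fun ω a b => by simp [updX0, Function.update_idem])
      _ _
      (fun ω a => by
        simp only [info1_updU2, info1p_updU2, info2_updU1, info2p_updU1, teamComP_updU2, teamComP_updU1, teamComP_updX1, teamComP_updX2, info1_updX2, info1p_updX2, info2_updX1, info2p_updX1, Bt0_updX2, Bt1_updX2, Bt0_updX1, stageF, Af1, Af2, Azk, Aob, Ag1, Ag2, Aga, core_congr hia ht hX (agl_updX0 ω hn a), info1_updX0 ω hn (show n < n + 1 by omega) a, info2_updX0 ω hn (show n < n + 1 by omega) a, info1p_updX0 ω hn (show n < n + 1 by omega) a, info2p_updX0 ω hn (show n < n + 1 by omega) a, X0v_updX0_lt ω hn (show n < n + 1 by omega) a, hia n (updX0 ω (idx M (n+1)) a) ω (teamComP_updX0 ω hn (show n < n + 1 by omega) a), X1v_updX0, X2v_updX0, M1v_updX0, M2v_updX0, Mv_updX0, Zv_updX0, Yv_updX0, U1v_updX0, U2v_updX0, UAv_updX0]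)
      (fun ω => by
        have hh : ∀ a' : M.X0, Bt0 n (updX0 ω (idx M (n+1)) a') = M.trans0 (X0v ω n) (UAv ω n) a' :=
          fun a' => by simp only [Bt0, UAv_updX0, X0v_updX0_lt ω hn (show n < n + 1 by omega) a', X0v_updX0_self]
        rw [Finset.sum_congr rfl fun a' _ => hh a']
        exact M.trans0_sum (X0v ω n) (UAv ω n))
  calc (Fintype.card M.X0 : ℝ) * ((Fintype.card M.X1 : ℝ) * (Fintype.card M.X2 : ℝ)) *
      ∑ ω : Traj M, core σ γ iap X n ω * stageF σ γ iap n ω * transF n ω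
      = (Fintype.card M.X0 : ℝ) * ((Fintype.card M.X1 : ℝ) * ((Fintype.card M.X2 : ℝ) * (∑ ω : Traj M, core σ γ iap X n ω * stageF σ γ iap n ω * Bt0 n ω * Bt1 n ω * Bt2 n ω))) := by rw [e0]; ring
    _ = (Fintype.card M.X0 : ℝ) * ((Fintype.card M.X1 : ℝ) * (∑ ω : Traj M, core σ γ iap X n ω * stageF σ γ iap n ω * Bt0 n ω * Bt1 n ω)) := by rw [hb3]
    _ = (Fintype.card M.X0 : ℝ) * (∑ ω : Traj M, core σ γ iap X n ω * stageF σ γ iap n ω * Bt0 n ω) := by rw [hb2]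
    _ = ∑ ω : Traj M, core σ γ iap X n ω * stageF σ γ iap n ω := by rw [hb1]

end ElimB

end TA


namespace TA

section Chain

variable {M : Model} {A : Type _}

/-- The constant arising from one application of `elimA`. -/
noncomputable def kapA (M : Model) : ℝ :=
  (Fintype.card Bool : ℝ) * ((Fintype.card Bool : ℝ) *
    ((Fintype.card (Option (M.X1 × M.X2)) : ℝ) * ((Fintype.card M.Y : ℝ) *
    ((Fintype.card M.U1 : ℝ) * ((Fintype.card M.U2 : ℝ) * (Fintype.card M.Ua : ℝ))))))

/-- The constant arising from one application of `elimB`. -/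
noncomputable def kapB (M : Model) : ℝ :=
  (Fintype.card M.X0 : ℝ) * ((Fintype.card M.X1 : ℝ) * (Fintype.card M.X2 : ℝ))

lemma card_pos_real (β : Type _) [Fintype β] [Nonempty β] : 0 < (Fintype.card β : ℝ) := by
  exact_mod_cast Fintype.card_pos

lemma kapA_pos : 0 < kapA M := by
  unfold kapA
  have h1 := card_pos_real Bool
  have h2 := card_pos_real (Option (M.X1 × M.X2))
  have h3 := card_pos_real M.Y
  have h4 := card_pos_real M.U1
  have h5 := card_pos_real M.U2
  have h6 := card_pos_real M.Ua
  exact mul_pos h1 (mul_pos h1 (mul_pos h2 (mul_pos h3 (mul_pos h4 (mul_pos h5 h6)))))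

lemma kapB_pos : 0 < kapB M := by
  unfold kapB
  exact mul_pos (card_pos_real M.X0) (mul_pos (card_pos_real M.X1) (card_pos_real M.X2))

lemma core_succ (σ : TeamStrategy M) (γ : AdvStrategy M A) (iap : ℕ → Traj M → A)
    (X : Traj M → Prop) (n : ℕ) (ω : Traj M) :
    core σ γ iap X (n+1) ω = core σ γ iap X n ω * stageF σ γ iap n ω * transF n ω := by
  simp only [core, Finset.prod_range_succ]
  ring

/-- Backward elimination: the probability of a prefix event equals (up to a positive
constant that does not depend on the event or on the strategies) the sum of the
truncated densities. -/
lemma main_reduction {iap : ℕ → Traj M → A} (hia : IapAdapted iap)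
    {t : ℕ} (ht : t < M.T) :
    ∃ c : ℝ, 0 < c ∧ ∀ (σ : TeamStrategy M) (γ : AdvStrategy M A) (X : Traj M → Prop),
      Prefixed t X → (∑ ω : Traj M, core σ γ iap X t ω) = c * pr σ γ iap X := by
  have chain : ∀ n, t ≤ n → n < M.T → ∃ c : ℝ, 0 < c ∧
      ∀ (σ : TeamStrategy M) (γ : AdvStrategy M A) (X : Traj M → Prop), Prefixed t X →
        (∑ ω : Traj M, core σ γ iap X t ω) = c * ∑ ω : Traj M, core σ γ iap X n ω := by
    intro n
    induction n with
    | zero =>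
      intro h1 _
      refine ⟨1, one_pos, fun σ γ X _ => ?_⟩
      have h0 : t = 0 := by omega
      rw [h0, one_mul]
    | succ n ih =>
      intro h1 h2
      rcases Nat.lt_or_ge t (n+1) with hlt | hge
      · have hn : t ≤ n := by omega
        have hnT : n < M.T := by omega
        obtain ⟨c, hc, hrec⟩ := ih hn hnT
        refine ⟨c * (kapA M * kapB M), mul_pos hc (mul_pos kapA_pos kapB_pos), fun σ γ X hX => ?_⟩
        have e1 : (∑ ω : Traj M, core σ γ iap X (n+1) ω)
            = ∑ ω : Traj M, core σ γ iap X n ω * stageF σ γ iap n ω * transF n ω :=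
          Finset.sum_congr rfl fun ω _ => core_succ σ γ iap X n ω
        have e2 : kapB M * (∑ ω : Traj M, core σ γ iap X (n+1) ω)
            = ∑ ω : Traj M, core σ γ iap X n ω * stageF σ γ iap n ω := by
          rw [e1]; exact elimB hia hX hn h2
        have e3 : kapA M * (kapB M * ∑ ω : Traj M, core σ γ iap X (n+1) ω)
            = ∑ ω : Traj M, core σ γ iap X n ω := by
          rw [e2]; exact elimA hia hX hn hnT
        rw [hrec σ γ X hX, ← e3]; ring
      · refine ⟨1, one_pos, fun σ γ X _ => ?_⟩
        have h0 : t = n + 1 := by omega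
        rw [h0, one_mul]
  have htop : ∀ (σ : TeamStrategy M) (γ : AdvStrategy M A) (X : Traj M → Prop),
      Prefixed t X →
      kapA M * pr σ γ iap X = ∑ ω : Traj M, core σ γ iap X (M.T - 1) ω := by
    intro σ γ X hX
    have hT1 : M.T = (M.T - 1) + 1 := by have := M.hT; omega
    have h1 : pr σ γ iap X
        = ∑ ω : Traj M, core σ γ iap X (M.T - 1) ω * stageF σ γ iap (M.T - 1) ω := by
      unfold pr
      refine Finset.sum_congr rfl fun ω _ => ?_
      have h2 : (if X ω then prob σ γ iap ω else 0)
          = (if X ω then 1 else 0) * prob σ γ iap ω := by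
        by_cases hx : X ω <;> simp [hx]
      rw [h2, prob_eq, show Finset.range M.T = Finset.range ((M.T - 1) + 1) from by
        rw [← hT1], Finset.prod_range_succ]
      simp only [core]
      ring
    rw [h1]
    exact elimA hia hX (by omega) (by omega)
  obtain ⟨c, hc, hrec⟩ := chain (M.T - 1) (by omega) (by omega)
  refine ⟨c * kapA M, mul_pos hc kapA_pos, fun σ γ X hX => ?_⟩
  rw [hrec σ γ X hX, ← htop σ γ X hX]
  ring

end Chain

end TA


namespace TA

section Split

variable {M : Model} {A : Type _}

/-- Common-information coordinates of a trajectory. -/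
abbrev Com (M : Model) :=
  (Fin M.T → M.X0) × (Fin M.T → Bool) × (Fin M.T → Bool) ×
  (Fin M.T → Option (M.X1 × M.X2)) × (Fin M.T → M.Y) × (Fin M.T → M.Ua)
abbrev Pv1 (M : Model) := (Fin M.T → M.X1) × (Fin M.T → M.U1)
abbrev Pv2 (M : Model) := (Fin M.T → M.X2) × (Fin M.T → M.U2)

def mkT (ξ : Com M) (p : Pv1 M) (q : Pv2 M) : Traj M :=
  (ξ.1, p.1, q.1, ξ.2.1, ξ.2.2.1, ξ.2.2.2.1, ξ.2.2.2.2.1, p.2, q.2, ξ.2.2.2.2.2)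

def comT (ω : Traj M) : Com M :=
  (ω.1, ω.2.2.2.1, ω.2.2.2.2.1, ω.2.2.2.2.2.1, ω.2.2.2.2.2.2.1, ω.2.2.2.2.2.2.2.2.2)
def pv1T (ω : Traj M) : Pv1 M := (ω.2.1, ω.2.2.2.2.2.2.2.1)
def pv2T (ω : Traj M) : Pv2 M := (ω.2.2.1, ω.2.2.2.2.2.2.2.2.1)

lemma mk_split (ω : Traj M) : mkT (comT ω) (pv1T ω) (pv2T ω) = ω := rfl

lemma sum_mk (f : Traj M → ℝ) :
    ∑ ω : Traj M, f ω = ∑ ξ : Com M, ∑ p : Pv1 M, ∑ q : Pv2 M, f (mkT ξ p q) := by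
  classical
  let e : Com M × Pv1 M × Pv2 M ≃ Traj M :=
    { toFun := fun x => mkT x.1 x.2.1 x.2.2
      invFun := fun ω => (comT ω, pv1T ω, pv2T ω)
      left_inv := fun x => rfl
      right_inv := fun ω => rfl }
  rw [← Equiv.sum_comp e f, Fintype.sum_prod_type]
  refine Finset.sum_congr rfl fun ξ _ => ?_
  rw [Fintype.sum_prod_type]
  rfl

/-- The three multiplicative parts of the erasure-channel kernel. -/
noncomputable def zk0 (x0 : M.X0) (m : Bool × Bool) (z : Option (M.X1 × M.X2)) : ℝ :=
  if m = (false, false) then (if z = none then 1 else 0)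
  else match z with
    | none => M.pe x0
    | some _ => 1 - M.pe x0

noncomputable def zk1 (m : Bool × Bool) (z : Option (M.X1 × M.X2)) (x1 : M.X1) : ℝ :=
  if m = (false, false) then 1
  else match z with
    | none => 1
    | some x' => if x'.1 = x1 then 1 else 0

noncomputable def zk2 (m : Bool × Bool) (z : Option (M.X1 × M.X2)) (x2 : M.X2) : ℝ :=
  if m = (false, false) then 1
  else match z with
    | none => 1
    | some x' => if x'.2 = x2 then 1 else 0

lemma zKer_factor (x0 : M.X0) (m : Bool × Bool) (x : M.X1 × M.X2)
    (z : Option (M.X1 × M.X2)) :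
    zKer M x0 m x z = zk0 x0 m z * zk1 m z x.1 * zk2 m z x.2 := by
  rcases eq_or_ne m (false, false) with hm | hm
  · simp [zKer, zk0, zk1, zk2, hm]
  · cases z with
    | none => simp [zKer, zk0, zk1, zk2, hm]
    | some x' =>
      simp only [zKer, zk0, zk1, zk2, if_neg hm]
      by_cases h1 : x'.1 = x.1 <;> by_cases h2 : x'.2 = x.2 <;>
        simp [Prod.ext_iff, h1, h2]

/-- The part of the truncated density depending on common information only. -/
noncomputable def G0 (γ : AdvStrategy M A) (iap : ℕ → Traj M → A) (t : ℕ)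
    (ω : Traj M) : ℝ :=
  M.init0 (X0v ω 0) * ∏ s ∈ Finset.range t,
    (zk0 (X0v ω s) (Mv ω s) (Zv ω s) * Aob s ω * Aga γ iap s ω * Bt0 s ω)

/-- The part of the truncated density depending on agent 1's variables. -/
noncomputable def G1 (σ : TeamStrategy M) (t : ℕ) (ω : Traj M) : ℝ :=
  M.init1 (X1v ω 0) * ∏ s ∈ Finset.range t,
    (Af1 σ s ω * zk1 (Mv ω s) (Zv ω s) (X1v ω s) * Ag1 σ s ω * Bt1 s ω)

/-- The part of the truncated density depending on agent 2's variables. -/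
noncomputable def G2 (σ : TeamStrategy M) (t : ℕ) (ω : Traj M) : ℝ :=
  M.init2 (X2v ω 0) * ∏ s ∈ Finset.range t,
    (Af2 σ s ω * zk2 (Mv ω s) (Zv ω s) (X2v ω s) * Ag2 σ s ω * Bt2 s ω)

lemma core_factor (σ : TeamStrategy M) (γ : AdvStrategy M A) (iap : ℕ → Traj M → A)
    (X : Traj M → Prop) (t : ℕ) (ω : Traj M) :
    core σ γ iap X t ω
      = (if X ω then 1 else 0) * (G0 γ iap t ω * (G1 σ t ω * G2 σ t ω)) := by
  have h : ∀ s, stageF σ γ iap s ω * transF s ω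
      = (zk0 (X0v ω s) (Mv ω s) (Zv ω s) * Aob s ω * Aga γ iap s ω * Bt0 s ω)
        * ((Af1 σ s ω * zk1 (Mv ω s) (Zv ω s) (X1v ω s) * Ag1 σ s ω * Bt1 s ω)
        * (Af2 σ s ω * zk2 (Mv ω s) (Zv ω s) (X2v ω s) * Ag2 σ s ω * Bt2 s ω)) := by
    intro s
    simp only [stageF, transF, Azk, zKer_factor]
    ring
  have tri : ∀ (f g k : ℕ → ℝ), (∏ s ∈ Finset.range t, (f s * (g s * k s)))
      = (∏ s ∈ Finset.range t, f s) * ((∏ s ∈ Finset.range t, g s)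
        * (∏ s ∈ Finset.range t, k s)) := fun f g k => by
    rw [Finset.prod_mul_distrib, Finset.prod_mul_distrib]
  simp only [core, C0f, G0, G1, G2]
  rw [mul_assoc, ← Finset.prod_mul_distrib, Finset.prod_congr rfl (fun s _ => h s),
    tri (fun s => zk0 (X0v ω s) (Mv ω s) (Zv ω s) * Aob s ω * Aga γ iap s ω * Bt0 s ω)
      (fun s => Af1 σ s ω * zk1 (Mv ω s) (Zv ω s) (X1v ω s) * Ag1 σ s ω * Bt1 s ω)
      (fun s => Af2 σ s ω * zk2 (Mv ω s) (Zv ω s) (X2v ω s) * Ag2 σ s ω * Bt2 s ω)]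
  ring

/-- `G0` depends only on the common information. -/
lemma G0_congr {γ : AdvStrategy M A} {iap : ℕ → Traj M → A} (hia : IapAdapted iap)
    {t : ℕ} {ω ω' : Traj M} (hc : teamCom t ω = teamCom t ω') :
    G0 γ iap t ω = G0 γ iap t ω' := by
  have h := hc
  simp only [teamCom, Prod.mk.injEq] at h
  obtain ⟨h0, hM, hZ, hA, hY⟩ := h
  unfold G0
  rw [pre_pt h0 (show 0 < t + 1 by omega)]
  refine congrArg _ (Finset.prod_congr rfl fun s hs => ?_)
  have hs' := Finset.mem_range.mp hs
  have e0 : X0v ω s = X0v ω' s := pre_pt h0 (by omega)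
  have e0' : X0v ω (s+1) = X0v ω' (s+1) := pre_pt h0 (by omega)
  have eM : Mv ω s = Mv ω' s := pre_pt hM hs'
  have eZ : Zv ω s = Zv ω' s := pre_pt hZ hs'
  have eA : UAv ω s = UAv ω' s := pre_pt hA hs'
  have eY : Yv ω s = Yv ω' s := pre_pt hY hs'
  have eiap : iap s ω = iap s ω' := by
    refine hia s ω ω' ?_
    simp only [teamComP, Prod.mk.injEq]
    exact ⟨pre_mono (by omega) h0, pre_mono (by omega) hM, pre_mono (by omega) hZ,
      pre_mono (by omega) hA, pre_mono (by omega) hY⟩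
  simp only [Aob, Aga, Bt0, e0, e0', eM, eZ, eA, eY, eiap]

/-- `G1` depends only on the common information and agent 1's private variables. -/
lemma G1_congr (σ : TeamStrategy M) {t : ℕ} {ω ω' : Traj M}
    (hc : teamCom t ω = teamCom t ω') (h1 : X1v ω = X1v ω') (hu : U1v ω = U1v ω') :
    G1 σ t ω = G1 σ t ω' := by
  have h := hc
  simp only [teamCom, Prod.mk.injEq] at h
  obtain ⟨h0, hM, hZ, hA, hY⟩ := h
  unfold G1
  rw [h1]
  refine congrArg _ (Finset.prod_congr rfl fun s hs => ?_)
  have hs' := Finset.mem_range.mp hs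
  have eM : Mv ω s = Mv ω' s := pre_pt hM hs'
  have eM1 : M1v ω s = M1v ω' s := congrArg Prod.fst eM
  have eZ : Zv ω s = Zv ω' s := pre_pt hZ hs'
  have e0 : X0v ω s = X0v ω' s := pre_pt h0 (by omega)
  have eI1 : info1 s ω = info1 s ω' := by
    simp only [info1, Prod.mk.injEq]
    exact ⟨pre_mono (by omega) h0, by rw [h1], by rw [hu], pre_mono (by omega) hM,
      pre_mono (by omega) hZ, pre_mono (by omega) hA, pre_mono (by omega) hY⟩
  have eI1p : info1p s ω = info1p s ω' := by
    simp only [info1p, Prod.mk.injEq]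
    exact ⟨pre_mono (by omega) h0, by rw [h1], by rw [hu], pre_mono (by omega) hM,
      pre_mono (by omega) hZ, pre_mono (by omega) hA, pre_mono (by omega) hY⟩
  simp only [Af1, Ag1, Bt1, eI1, eI1p, eM1, eM, eZ, e0, h1, hu]

/-- `G2` depends only on the common information and agent 2's private variables. -/
lemma G2_congr (σ : TeamStrategy M) {t : ℕ} {ω ω' : Traj M}
    (hc : teamCom t ω = teamCom t ω') (h2 : X2v ω = X2v ω') (hu : U2v ω = U2v ω') :
    G2 σ t ω = G2 σ t ω' := by
  have h := hc
  simp only [teamCom, Prod.mk.injEq] at h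
  obtain ⟨h0, hM, hZ, hA, hY⟩ := h
  unfold G2
  rw [h2]
  refine congrArg _ (Finset.prod_congr rfl fun s hs => ?_)
  have hs' := Finset.mem_range.mp hs
  have eM : Mv ω s = Mv ω' s := pre_pt hM hs'
  have eM2 : M2v ω s = M2v ω' s := congrArg Prod.snd eM
  have eZ : Zv ω s = Zv ω' s := pre_pt hZ hs'
  have e0 : X0v ω s = X0v ω' s := pre_pt h0 (by omega)
  have eI2 : info2 s ω = info2 s ω' := by
    simp only [info2, Prod.mk.injEq]
    exact ⟨pre_mono (by omega) h0, by rw [h2], by rw [hu], pre_mono (by omega) hM,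
      pre_mono (by omega) hZ, pre_mono (by omega) hA, pre_mono (by omega) hY⟩
  have eI2p : info2p s ω = info2p s ω' := by
    simp only [info2p, Prod.mk.injEq]
    exact ⟨pre_mono (by omega) h0, by rw [h2], by rw [hu], pre_mono (by omega) hM,
      pre_mono (by omega) hZ, pre_mono (by omega) hA, pre_mono (by omega) hY⟩
  simp only [Af2, Ag2, Bt2, eI2, eI2p, eM2, eM, eZ, e0, h2, hu]

/-- `G1` depends only on agent 1's strategy components. -/
lemma G1_strategy {σ σ' : TeamStrategy M} (hf : σ'.f1 = σ.f1) (hg : σ'.g1 = σ.g1)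
    (t : ℕ) (ω : Traj M) : G1 σ' t ω = G1 σ t ω := by
  simp only [G1, Af1, Ag1, hf, hg]

/-- `G2` depends only on agent 2's strategy components. -/
lemma G2_strategy {σ σ' : TeamStrategy M} (hf : σ'.f2 = σ.f2) (hg : σ'.g2 = σ.g2)
    (t : ℕ) (ω : Traj M) : G2 σ' t ω = G2 σ t ω := by
  simp only [G2, Af2, Ag2, hf, hg]

lemma pr_congr (σ : TeamStrategy M) (γ : AdvStrategy M A) (iap : ℕ → Traj M → A)
    {X Y : Traj M → Prop} (h : ∀ ω, X ω ↔ Y ω) : pr σ γ iap X = pr σ γ iap Y := by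
  unfold pr
  exact Finset.sum_congr rfl fun ω _ => by rw [if_congr (h ω) rfl rfl]

/-- Splitting of the truncated-density sum into common, agent-1 and agent-2 parts. -/
lemma Q_split (σ : TeamStrategy M) (γ : AdvStrategy M A) {iap : ℕ → Traj M → A}
    (hia : IapAdapted iap) (t : ℕ) (E1 : Pv1 M → Prop) (E2 : Pv2 M → Prop)
    (ω0 : Traj M) :
    (∑ ω : Traj M, core σ γ iap
        (fun ω => teamCom t ω = teamCom t ω0 ∧ E1 (pv1T ω) ∧ E2 (pv2T ω)) t ω)
      = (∑ ξ : Com M, if teamCom t (mkT ξ (pv1T ω0) (pv2T ω0)) = teamCom t ω0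
            then G0 γ iap t (mkT ξ (pv1T ω0) (pv2T ω0)) else 0)
        * ((∑ p : Pv1 M, if E1 p then G1 σ t (mkT (comT ω0) p (pv2T ω0)) else 0)
          * (∑ q : Pv2 M, if E2 q then G2 σ t (mkT (comT ω0) (pv1T ω0) q) else 0)) := by
  classical
  rw [sum_mk]
  have step1 : ∀ (ξ : Com M) (p : Pv1 M) (q : Pv2 M),
      core σ γ iap (fun ω => teamCom t ω = teamCom t ω0 ∧ E1 (pv1T ω) ∧ E2 (pv2T ω)) t
        (mkT ξ p q)
      = (if teamCom t (mkT ξ (pv1T ω0) (pv2T ω0)) = teamCom t ω0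
            then G0 γ iap t (mkT ξ (pv1T ω0) (pv2T ω0)) else 0)
        * ((if E1 p then G1 σ t (mkT ξ p (pv2T ω0)) else 0)
          * (if E2 q then G2 σ t (mkT ξ (pv1T ω0) q) else 0)) := by
    intro ξ p q
    rw [core_factor]
    have hG0 : G0 γ iap t (mkT ξ p q) = G0 γ iap t (mkT ξ (pv1T ω0) (pv2T ω0)) :=
      G0_congr hia rfl
    have hG1 : G1 σ t (mkT ξ p q) = G1 σ t (mkT ξ p (pv2T ω0)) := rfl
    have hG2 : G2 σ t (mkT ξ p q) = G2 σ t (mkT ξ (pv1T ω0) q) := rfl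
    have hcnd : (teamCom t (mkT ξ p q) = teamCom t ω0)
        ↔ (teamCom t (mkT ξ (pv1T ω0) (pv2T ω0)) = teamCom t ω0) := Iff.rfl
    have hp : pv1T (mkT ξ p q) = p := rfl
    have hq : pv2T (mkT ξ p q) = q := rfl
    by_cases h0 : teamCom t (mkT ξ (pv1T ω0) (pv2T ω0)) = teamCom t ω0 <;>
      by_cases h1 : E1 p <;> by_cases h2 : E2 q <;>
        simp [hG0, hG1, hG2, hp, hq, hcnd, h0, h1, h2]
  calc (∑ ξ : Com M, ∑ p : Pv1 M, ∑ q : Pv2 M,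
        core σ γ iap (fun ω => teamCom t ω = teamCom t ω0 ∧ E1 (pv1T ω) ∧ E2 (pv2T ω)) t
          (mkT ξ p q))
      = ∑ ξ : Com M, (if teamCom t (mkT ξ (pv1T ω0) (pv2T ω0)) = teamCom t ω0
            then G0 γ iap t (mkT ξ (pv1T ω0) (pv2T ω0)) else 0)
          * ((∑ p : Pv1 M, if E1 p then G1 σ t (mkT ξ p (pv2T ω0)) else 0)
            * (∑ q : Pv2 M, if E2 q then G2 σ t (mkT ξ (pv1T ω0) q) else 0)) := by
        refine Finset.sum_congr rfl fun ξ _ => ?_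
        rw [Finset.sum_congr rfl fun p _ => Finset.sum_congr rfl fun q _ => step1 ξ p q]
        simp only [← Finset.mul_sum]
        rw [← Finset.sum_mul]
    _ = ∑ ξ : Com M, (if teamCom t (mkT ξ (pv1T ω0) (pv2T ω0)) = teamCom t ω0
            then G0 γ iap t (mkT ξ (pv1T ω0) (pv2T ω0)) else 0)
          * ((∑ p : Pv1 M, if E1 p then G1 σ t (mkT (comT ω0) p (pv2T ω0)) else 0)
            * (∑ q : Pv2 M, if E2 q then G2 σ t (mkT (comT ω0) (pv1T ω0) q) else 0)) := by
        refine Finset.sum_congr rfl fun ξ _ => ?_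
        by_cases h0 : teamCom t (mkT ξ (pv1T ω0) (pv2T ω0)) = teamCom t ω0
        · have hS1 : (∑ p : Pv1 M, if E1 p then G1 σ t (mkT ξ p (pv2T ω0)) else 0)
              = ∑ p : Pv1 M, if E1 p then G1 σ t (mkT (comT ω0) p (pv2T ω0)) else 0 :=
            Finset.sum_congr rfl fun p _ => by
              by_cases h1 : E1 p
              · rw [if_pos h1, if_pos h1, G1_congr σ (ω := mkT ξ p (pv2T ω0)) (ω' := mkT (comT ω0) p (pv2T ω0)) h0 rfl rfl]
              · rw [if_neg h1, if_neg h1]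
          have hS2 : (∑ q : Pv2 M, if E2 q then G2 σ t (mkT ξ (pv1T ω0) q) else 0)
              = ∑ q : Pv2 M, if E2 q then G2 σ t (mkT (comT ω0) (pv1T ω0) q) else 0 :=
            Finset.sum_congr rfl fun q _ => by
              by_cases h2 : E2 q
              · rw [if_pos h2, if_pos h2, G2_congr σ (ω := mkT ξ (pv1T ω0) q) (ω' := mkT (comT ω0) (pv1T ω0) q) h0 rfl rfl]
              · rw [if_neg h2, if_neg h2]
          rw [hS1, hS2]
        · rw [if_neg h0, zero_mul, zero_mul]
    _ = _ := by rw [← Finset.sum_mul]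

/-- Agent 1's private prefix event. -/
def Pev1 (M : Model) (t : ℕ) (xl : List M.X1) (ul : List M.U1) : Pv1 M → Prop :=
  fun p => pre (t+1) (fun s => p.1 (idx M s)) = xl ∧ pre t (fun s => p.2 (idx M s)) = ul

/-- Agent 2's private prefix event. -/
def Pev2 (M : Model) (t : ℕ) (xl : List M.X2) (ul : List M.U2) : Pv2 M → Prop :=
  fun q => pre (t+1) (fun s => q.1 (idx M s)) = xl ∧ pre t (fun s => q.2 (idx M s)) = ul

/-- The trivial private event. -/
def PevT1 (M : Model) : Pv1 M → Prop := fun _ => True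

/-- The trivial private event. -/
def PevT2 (M : Model) : Pv2 M → Prop := fun _ => True

end Split

end TA

namespace TA

/-- Lemma 1 of the paper, before communication. -/
theorem lemma1_before_communication (M : Model) (IS : InfoStructure M)
    (σ : TeamStrategy M) (γ : AdvStrategy M IS.C)
    (t : ℕ) (ht : t < M.T) (c : IS.C) (d : IS.D)
    (hpos : 0 < pr σ γ IS.infoCp (fun ω => IS.infoC t ω = c ∧ IS.infoD t ω = d))
    (ξ1 : List M.X1) (ξ2 : List M.X2) (υ1 : List M.U1) (υ2 : List M.U2) :
    (cpr σ γ IS.infoCp (fun ω => IS.infoC t ω = c ∧ IS.infoD t ω = d)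
        (fun ω => pre (t+1) (X1v ω) = ξ1 ∧ pre (t+1) (X2v ω) = ξ2 ∧
                  pre t (U1v ω) = υ1 ∧ pre t (U2v ω) = υ2)
      = cpr σ γ IS.infoCp (fun ω => IS.infoC t ω = c ∧ IS.infoD t ω = d)
          (fun ω => pre (t+1) (X1v ω) = ξ1 ∧ pre t (U1v ω) = υ1) *
        cpr σ γ IS.infoCp (fun ω => IS.infoC t ω = c ∧ IS.infoD t ω = d)
          (fun ω => pre (t+1) (X2v ω) = ξ2 ∧ pre t (U2v ω) = υ2)) ∧
    (∀ (σ' : TeamStrategy M) (γ' : AdvStrategy M IS.C),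
        σ'.f1 = σ.f1 → σ'.g1 = σ.g1 →
        0 < pr σ' γ' IS.infoCp (fun ω => IS.infoC t ω = c ∧ IS.infoD t ω = d) →
        cpr σ' γ' IS.infoCp (fun ω => IS.infoC t ω = c ∧ IS.infoD t ω = d)
            (fun ω => pre (t+1) (X1v ω) = ξ1 ∧ pre t (U1v ω) = υ1)
          = cpr σ γ IS.infoCp (fun ω => IS.infoC t ω = c ∧ IS.infoD t ω = d)
              (fun ω => pre (t+1) (X1v ω) = ξ1 ∧ pre t (U1v ω) = υ1)) ∧
    (∀ (σ' : TeamStrategy M) (γ' : AdvStrategy M IS.C),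
        σ'.f2 = σ.f2 → σ'.g2 = σ.g2 →
        0 < pr σ' γ' IS.infoCp (fun ω => IS.infoC t ω = c ∧ IS.infoD t ω = d) →
        cpr σ' γ' IS.infoCp (fun ω => IS.infoC t ω = c ∧ IS.infoD t ω = d)
            (fun ω => pre (t+1) (X2v ω) = ξ2 ∧ pre t (U2v ω) = υ2)
          = cpr σ γ IS.infoCp (fun ω => IS.infoC t ω = c ∧ IS.infoD t ω = d)
              (fun ω => pre (t+1) (X2v ω) = ξ2 ∧ pre t (U2v ω) = υ2)) := by
  classical
  have hia : IapAdapted IS.infoCp := fun s ω ω' h => ((IS.cdp_team s ω ω').mpr h).1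
  obtain ⟨cst, hcst, hmain⟩ := main_reduction (M := M) (A := IS.C) hia ht
  -- a witness trajectory for the conditioning event
  have hex : ∃ ω0 : Traj M, IS.infoC t ω0 = c ∧ IS.infoD t ω0 = d := by
    by_contra hne
    push_neg at hne
    have h0 : pr σ γ IS.infoCp (fun ω => IS.infoC t ω = c ∧ IS.infoD t ω = d) = 0 := by
      unfold pr
      refine Finset.sum_eq_zero fun ω _ => ?_
      rw [if_neg]
      rintro ⟨h1, h2⟩
      exact hne ω h1 h2
    rw [h0] at hpos
    exact lt_irrefl 0 hpos
  obtain ⟨ω0, hc0, hd0⟩ := hex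
  have hE : ∀ ω : Traj M,
      (IS.infoC t ω = c ∧ IS.infoD t ω = d) ↔ teamCom t ω = teamCom t ω0 := by
    intro ω
    constructor
    · rintro ⟨h1, h2⟩
      exact (IS.cd_team t ω ω0).mp ⟨h1.trans hc0.symm, h2.trans hd0.symm⟩
    · intro h
      have h' := (IS.cd_team t ω ω0).mpr h
      exact ⟨h'.1.trans hc0, h'.2.trans hd0⟩
  -- invariance of the private events under prefix agreement
  have hinv1 : ∀ ω ω' : Traj M, agl t ω ω' →
      (Pev1 M t ξ1 υ1 (pv1T ω) ↔ Pev1 M t ξ1 υ1 (pv1T ω')) := by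
    intro ω ω' hagl
    have e1 : pre (t+1) (X1v ω) = pre (t+1) (X1v ω') :=
      pre_congr fun s hs => hagl.2.1 s (by omega)
    have e2 : pre t (U1v ω) = pre t (U1v ω') :=
      pre_congr fun s hs => hagl.2.2.2.2.2.2.2.1 s hs
    constructor <;> intro h
    · exact ⟨e1.symm.trans h.1, e2.symm.trans h.2⟩
    · exact ⟨e1.trans h.1, e2.trans h.2⟩
  have hinv2 : ∀ ω ω' : Traj M, agl t ω ω' →
      (Pev2 M t ξ2 υ2 (pv2T ω) ↔ Pev2 M t ξ2 υ2 (pv2T ω')) := by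
    intro ω ω' hagl
    have e1 : pre (t+1) (X2v ω) = pre (t+1) (X2v ω') :=
      pre_congr fun s hs => hagl.2.2.1 s (by omega)
    have e2 : pre t (U2v ω) = pre t (U2v ω') :=
      pre_congr fun s hs => hagl.2.2.2.2.2.2.2.2.1 s hs
    constructor <;> intro h
    · exact ⟨e1.symm.trans h.1, e2.symm.trans h.2⟩
    · exact ⟨e1.trans h.1, e2.trans h.2⟩
  have htrue1 : ∀ ω ω' : Traj M, agl t ω ω' →
      (PevT1 M (pv1T ω) ↔ PevT1 M (pv1T ω')) := fun _ _ _ => Iff.rfl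
  have htrue2 : ∀ ω ω' : Traj M, agl t ω ω' →
      (PevT2 M (pv2T ω) ↔ PevT2 M (pv2T ω')) := fun _ _ _ => Iff.rfl
  -- the master computation of prefix-event probabilities
  have hprQ : ∀ (σ' : TeamStrategy M) (γ' : AdvStrategy M IS.C)
      (E1 : Pv1 M → Prop) (E2 : Pv2 M → Prop),
      (∀ ω ω' : Traj M, agl t ω ω' → (E1 (pv1T ω) ↔ E1 (pv1T ω'))) →
      (∀ ω ω' : Traj M, agl t ω ω' → (E2 (pv2T ω) ↔ E2 (pv2T ω'))) →
      cst * pr σ' γ' IS.infoCp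
          (fun ω => teamCom t ω = teamCom t ω0 ∧ E1 (pv1T ω) ∧ E2 (pv2T ω))
        = (∑ ξ : Com M, if teamCom t (mkT ξ (pv1T ω0) (pv2T ω0)) = teamCom t ω0
              then G0 γ' IS.infoCp t (mkT ξ (pv1T ω0) (pv2T ω0)) else 0)
          * ((∑ p : Pv1 M, if E1 p then G1 σ' t (mkT (comT ω0) p (pv2T ω0)) else 0)
            * (∑ q : Pv2 M, if E2 q then G2 σ' t (mkT (comT ω0) (pv1T ω0) q) else 0)) := by
    intro σ' γ' E1 E2 hE1 hE2
    have hpre : Prefixed t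
        (fun ω => teamCom t ω = teamCom t ω0 ∧ E1 (pv1T ω) ∧ E2 (pv2T ω)) := by
      intro ω ω' hagl
      have hc' := teamCom_congr (le_refl t) hagl
      constructor
      · rintro ⟨h0, h1, h2⟩
        exact ⟨hc'.symm.trans h0, (hE1 ω ω' hagl).mp h1, (hE2 ω ω' hagl).mp h2⟩
      · rintro ⟨h0, h1, h2⟩
        exact ⟨hc'.trans h0, (hE1 ω ω' hagl).mpr h1, (hE2 ω ω' hagl).mpr h2⟩
    rw [← hmain σ' γ' _ hpre]
    exact Q_split σ' γ' hia t E1 E2 ω0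
  -- probabilities of the four events, for arbitrary strategies
  have hPRfull : ∀ (σ' : TeamStrategy M) (γ' : AdvStrategy M IS.C),
      cst * pr σ' γ' IS.infoCp (fun ω =>
          (pre (t+1) (X1v ω) = ξ1 ∧ pre (t+1) (X2v ω) = ξ2 ∧
            pre t (U1v ω) = υ1 ∧ pre t (U2v ω) = υ2) ∧
          (IS.infoC t ω = c ∧ IS.infoD t ω = d))
        = (∑ ξ : Com M, if teamCom t (mkT ξ (pv1T ω0) (pv2T ω0)) = teamCom t ω0
          then G0 γ' IS.infoCp t (mkT ξ (pv1T ω0) (pv2T ω0)) else 0) * ((∑ p : Pv1 M, if Pev1 M t ξ1 υ1 p then G1 σ' t (mkT (comT ω0) p (pv2T ω0)) else 0) * (∑ q : Pv2 M, if Pev2 M t ξ2 υ2 q then G2 σ' t (mkT (comT ω0) (pv1T ω0) q) else 0)) := by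
    intro σ' γ'
    rw [pr_congr σ' γ' IS.infoCp (Y := (fun ω => teamCom t ω = teamCom t ω0 ∧ Pev1 M t ξ1 υ1 (pv1T ω) ∧ Pev2 M t ξ2 υ2 (pv2T ω))) ?_]
    · exact hprQ σ' γ' (Pev1 M t ξ1 υ1) (Pev2 M t ξ2 υ2) hinv1 hinv2
    · intro ω
      constructor
      · rintro ⟨⟨h1, h2, h3, h4⟩, hEv⟩
        exact ⟨(hE ω).mp hEv, ⟨h1, h3⟩, ⟨h2, h4⟩⟩
      · rintro ⟨h0, hP, hQ⟩
        exact ⟨⟨hP.1, hQ.1, hP.2, hQ.2⟩, (hE ω).mpr h0⟩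
  have hPR1 : ∀ (σ' : TeamStrategy M) (γ' : AdvStrategy M IS.C),
      cst * pr σ' γ' IS.infoCp (fun ω =>
          (pre (t+1) (X1v ω) = ξ1 ∧ pre t (U1v ω) = υ1) ∧
          (IS.infoC t ω = c ∧ IS.infoD t ω = d))
        = (∑ ξ : Com M, if teamCom t (mkT ξ (pv1T ω0) (pv2T ω0)) = teamCom t ω0
          then G0 γ' IS.infoCp t (mkT ξ (pv1T ω0) (pv2T ω0)) else 0) * ((∑ p : Pv1 M, if Pev1 M t ξ1 υ1 p then G1 σ' t (mkT (comT ω0) p (pv2T ω0)) else 0) * (∑ q : Pv2 M, if PevT2 M q then G2 σ' t (mkT (comT ω0) (pv1T ω0) q) else 0)) := by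
    intro σ' γ'
    rw [pr_congr σ' γ' IS.infoCp (Y := (fun ω => teamCom t ω = teamCom t ω0 ∧ Pev1 M t ξ1 υ1 (pv1T ω) ∧ PevT2 M (pv2T ω))) ?_]
    · exact hprQ σ' γ' (Pev1 M t ξ1 υ1) (PevT2 M) hinv1 htrue2
    · intro ω
      constructor
      · rintro ⟨⟨h1, h3⟩, hEv⟩
        exact ⟨(hE ω).mp hEv, ⟨h1, h3⟩, trivial⟩
      · rintro ⟨h0, hP, -⟩
        exact ⟨⟨hP.1, hP.2⟩, (hE ω).mpr h0⟩
  have hPR2 : ∀ (σ' : TeamStrategy M) (γ' : AdvStrategy M IS.C),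
      cst * pr σ' γ' IS.infoCp (fun ω =>
          (pre (t+1) (X2v ω) = ξ2 ∧ pre t (U2v ω) = υ2) ∧
          (IS.infoC t ω = c ∧ IS.infoD t ω = d))
        = (∑ ξ : Com M, if teamCom t (mkT ξ (pv1T ω0) (pv2T ω0)) = teamCom t ω0
          then G0 γ' IS.infoCp t (mkT ξ (pv1T ω0) (pv2T ω0)) else 0) * ((∑ p : Pv1 M, if PevT1 M p then G1 σ' t (mkT (comT ω0) p (pv2T ω0)) else 0) * (∑ q : Pv2 M, if Pev2 M t ξ2 υ2 q then G2 σ' t (mkT (comT ω0) (pv1T ω0) q) else 0)) := by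
    intro σ' γ'
    rw [pr_congr σ' γ' IS.infoCp (Y := (fun ω => teamCom t ω = teamCom t ω0 ∧ PevT1 M (pv1T ω) ∧ Pev2 M t ξ2 υ2 (pv2T ω))) ?_]
    · exact hprQ σ' γ' (PevT1 M) (Pev2 M t ξ2 υ2) htrue1 hinv2
    · intro ω
      constructor
      · rintro ⟨⟨h2, h4⟩, hEv⟩
        exact ⟨(hE ω).mp hEv, trivial, ⟨h2, h4⟩⟩
      · rintro ⟨h0, -, hQ⟩
        exact ⟨⟨hQ.1, hQ.2⟩, (hE ω).mpr h0⟩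
  have hPRE : ∀ (σ' : TeamStrategy M) (γ' : AdvStrategy M IS.C),
      cst * pr σ' γ' IS.infoCp (fun ω => IS.infoC t ω = c ∧ IS.infoD t ω = d)
        = (∑ ξ : Com M, if teamCom t (mkT ξ (pv1T ω0) (pv2T ω0)) = teamCom t ω0
          then G0 γ' IS.infoCp t (mkT ξ (pv1T ω0) (pv2T ω0)) else 0) * ((∑ p : Pv1 M, if PevT1 M p then G1 σ' t (mkT (comT ω0) p (pv2T ω0)) else 0) * (∑ q : Pv2 M, if PevT2 M q then G2 σ' t (mkT (comT ω0) (pv1T ω0) q) else 0)) := by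
    intro σ' γ'
    rw [pr_congr σ' γ' IS.infoCp (Y := (fun ω => teamCom t ω = teamCom t ω0 ∧ PevT1 M (pv1T ω) ∧ PevT2 M (pv2T ω))) ?_]
    · exact hprQ σ' γ' (PevT1 M) (PevT2 M) htrue1 htrue2
    · intro ω
      constructor
      · intro hEv
        exact ⟨(hE ω).mp hEv, trivial, trivial⟩
      · rintro ⟨h0, -, -⟩
        exact (hE ω).mpr h0
  have hcstne : cst ≠ 0 := ne_of_gt hcst
  -- nonvanishing of the denominators, from positivity of the conditioning event
  have hNZ : ∀ (σ' : TeamStrategy M) (γ' : AdvStrategy M IS.C),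
      0 < pr σ' γ' IS.infoCp (fun ω => IS.infoC t ω = c ∧ IS.infoD t ω = d) →
      (∑ ξ : Com M, if teamCom t (mkT ξ (pv1T ω0) (pv2T ω0)) = teamCom t ω0
          then G0 γ' IS.infoCp t (mkT ξ (pv1T ω0) (pv2T ω0)) else 0) ≠ 0 ∧ (∑ p : Pv1 M, if PevT1 M p then G1 σ' t (mkT (comT ω0) p (pv2T ω0)) else 0) ≠ 0 ∧ (∑ q : Pv2 M, if PevT2 M q then G2 σ' t (mkT (comT ω0) (pv1T ω0) q) else 0) ≠ 0 := by
    intro σ' γ' hp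
    have h1 : (0:ℝ) < (∑ ξ : Com M, if teamCom t (mkT ξ (pv1T ω0) (pv2T ω0)) = teamCom t ω0
          then G0 γ' IS.infoCp t (mkT ξ (pv1T ω0) (pv2T ω0)) else 0) * ((∑ p : Pv1 M, if PevT1 M p then G1 σ' t (mkT (comT ω0) p (pv2T ω0)) else 0) * (∑ q : Pv2 M, if PevT2 M q then G2 σ' t (mkT (comT ω0) (pv1T ω0) q) else 0)) := by
      rw [← hPRE σ' γ']
      exact mul_pos hcst hp
    have h2 := ne_of_gt h1
    rcases mul_ne_zero_iff.mp h2 with ⟨hK, h3⟩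
    rcases mul_ne_zero_iff.mp h3 with ⟨hS1, hS2⟩
    exact ⟨hK, hS1, hS2⟩
  obtain ⟨hK, hT1, hT2⟩ := hNZ σ γ hpos
  have hprE : pr σ γ IS.infoCp (fun ω => IS.infoC t ω = c ∧ IS.infoD t ω = d)
      = ((∑ ξ : Com M, if teamCom t (mkT ξ (pv1T ω0) (pv2T ω0)) = teamCom t ω0
          then G0 γ IS.infoCp t (mkT ξ (pv1T ω0) (pv2T ω0)) else 0) * ((∑ p : Pv1 M, if PevT1 M p then G1 σ t (mkT (comT ω0) p (pv2T ω0)) else 0) * (∑ q : Pv2 M, if PevT2 M q then G2 σ t (mkT (comT ω0) (pv1T ω0) q) else 0))) / cst := by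
    rw [eq_div_iff hcstne, mul_comm]
    exact hPRE σ γ
  refine ⟨?_, ?_, ?_⟩
  · -- conditional independence
    unfold cpr
    have e1 : pr σ γ IS.infoCp (fun ω =>
          (pre (t+1) (X1v ω) = ξ1 ∧ pre (t+1) (X2v ω) = ξ2 ∧
            pre t (U1v ω) = υ1 ∧ pre t (U2v ω) = υ2) ∧
          (IS.infoC t ω = c ∧ IS.infoD t ω = d))
        = ((∑ ξ : Com M, if teamCom t (mkT ξ (pv1T ω0) (pv2T ω0)) = teamCom t ω0
          then G0 γ IS.infoCp t (mkT ξ (pv1T ω0) (pv2T ω0)) else 0) * ((∑ p : Pv1 M, if Pev1 M t ξ1 υ1 p then G1 σ t (mkT (comT ω0) p (pv2T ω0)) else 0) * (∑ q : Pv2 M, if Pev2 M t ξ2 υ2 q then G2 σ t (mkT (comT ω0) (pv1T ω0) q) else 0))) / cst := by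
      rw [eq_div_iff hcstne, mul_comm]
      exact hPRfull σ γ
    have e2 : pr σ γ IS.infoCp (fun ω =>
          (pre (t+1) (X1v ω) = ξ1 ∧ pre t (U1v ω) = υ1) ∧
          (IS.infoC t ω = c ∧ IS.infoD t ω = d))
        = ((∑ ξ : Com M, if teamCom t (mkT ξ (pv1T ω0) (pv2T ω0)) = teamCom t ω0
          then G0 γ IS.infoCp t (mkT ξ (pv1T ω0) (pv2T ω0)) else 0) * ((∑ p : Pv1 M, if Pev1 M t ξ1 υ1 p then G1 σ t (mkT (comT ω0) p (pv2T ω0)) else 0) * (∑ q : Pv2 M, if PevT2 M q then G2 σ t (mkT (comT ω0) (pv1T ω0) q) else 0))) / cst := by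
      rw [eq_div_iff hcstne, mul_comm]
      exact hPR1 σ γ
    have e3 : pr σ γ IS.infoCp (fun ω =>
          (pre (t+1) (X2v ω) = ξ2 ∧ pre t (U2v ω) = υ2) ∧
          (IS.infoC t ω = c ∧ IS.infoD t ω = d))
        = ((∑ ξ : Com M, if teamCom t (mkT ξ (pv1T ω0) (pv2T ω0)) = teamCom t ω0
          then G0 γ IS.infoCp t (mkT ξ (pv1T ω0) (pv2T ω0)) else 0) * ((∑ p : Pv1 M, if PevT1 M p then G1 σ t (mkT (comT ω0) p (pv2T ω0)) else 0) * (∑ q : Pv2 M, if Pev2 M t ξ2 υ2 q then G2 σ t (mkT (comT ω0) (pv1T ω0) q) else 0))) / cst := by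
      rw [eq_div_iff hcstne, mul_comm]
      exact hPR2 σ γ
    rw [e1, e2, e3, hprE]
    field_simp
  · -- the agent-1 factor depends only on agent 1's strategy
    intro σ' γ' hf1 hg1 hpos'
    obtain ⟨hK', hT1', hT2'⟩ := hNZ σ' γ' hpos'
    have hS1eq : (∑ p : Pv1 M, if Pev1 M t ξ1 υ1 p then G1 σ' t (mkT (comT ω0) p (pv2T ω0)) else 0) = (∑ p : Pv1 M, if Pev1 M t ξ1 υ1 p then G1 σ t (mkT (comT ω0) p (pv2T ω0)) else 0) :=
      Finset.sum_congr rfl fun p _ => by rw [G1_strategy hf1 hg1]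
    have hT1eq : (∑ p : Pv1 M, if PevT1 M p then G1 σ' t (mkT (comT ω0) p (pv2T ω0)) else 0) = (∑ p : Pv1 M, if PevT1 M p then G1 σ t (mkT (comT ω0) p (pv2T ω0)) else 0) :=
      Finset.sum_congr rfl fun p _ => by rw [G1_strategy hf1 hg1]
    unfold cpr
    have e2' : pr σ' γ' IS.infoCp (fun ω =>
          (pre (t+1) (X1v ω) = ξ1 ∧ pre t (U1v ω) = υ1) ∧
          (IS.infoC t ω = c ∧ IS.infoD t ω = d))
        = ((∑ ξ : Com M, if teamCom t (mkT ξ (pv1T ω0) (pv2T ω0)) = teamCom t ω0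
          then G0 γ' IS.infoCp t (mkT ξ (pv1T ω0) (pv2T ω0)) else 0) * ((∑ p : Pv1 M, if Pev1 M t ξ1 υ1 p then G1 σ' t (mkT (comT ω0) p (pv2T ω0)) else 0) * (∑ q : Pv2 M, if PevT2 M q then G2 σ' t (mkT (comT ω0) (pv1T ω0) q) else 0))) / cst := by
      rw [eq_div_iff hcstne, mul_comm]
      exact hPR1 σ' γ'
    have e2 : pr σ γ IS.infoCp (fun ω =>
          (pre (t+1) (X1v ω) = ξ1 ∧ pre t (U1v ω) = υ1) ∧
          (IS.infoC t ω = c ∧ IS.infoD t ω = d))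
        = ((∑ ξ : Com M, if teamCom t (mkT ξ (pv1T ω0) (pv2T ω0)) = teamCom t ω0
          then G0 γ IS.infoCp t (mkT ξ (pv1T ω0) (pv2T ω0)) else 0) * ((∑ p : Pv1 M, if Pev1 M t ξ1 υ1 p then G1 σ t (mkT (comT ω0) p (pv2T ω0)) else 0) * (∑ q : Pv2 M, if PevT2 M q then G2 σ t (mkT (comT ω0) (pv1T ω0) q) else 0))) / cst := by
      rw [eq_div_iff hcstne, mul_comm]
      exact hPR1 σ γ
    have hprE' : pr σ' γ' IS.infoCp (fun ω => IS.infoC t ω = c ∧ IS.infoD t ω = d)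
        = ((∑ ξ : Com M, if teamCom t (mkT ξ (pv1T ω0) (pv2T ω0)) = teamCom t ω0
          then G0 γ' IS.infoCp t (mkT ξ (pv1T ω0) (pv2T ω0)) else 0) * ((∑ p : Pv1 M, if PevT1 M p then G1 σ' t (mkT (comT ω0) p (pv2T ω0)) else 0) * (∑ q : Pv2 M, if PevT2 M q then G2 σ' t (mkT (comT ω0) (pv1T ω0) q) else 0))) / cst := by
      rw [eq_div_iff hcstne, mul_comm]
      exact hPRE σ' γ'
    rw [e2', e2, hprE, hprE', hS1eq, hT1eq]
    rw [hT1eq] at hT1'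
    field_simp
  · -- the agent-2 factor depends only on agent 2's strategy
    intro σ' γ' hf2 hg2 hpos'
    obtain ⟨hK', hT1', hT2'⟩ := hNZ σ' γ' hpos'
    have hS2eq : (∑ q : Pv2 M, if Pev2 M t ξ2 υ2 q then G2 σ' t (mkT (comT ω0) (pv1T ω0) q) else 0) = (∑ q : Pv2 M, if Pev2 M t ξ2 υ2 q then G2 σ t (mkT (comT ω0) (pv1T ω0) q) else 0) :=
      Finset.sum_congr rfl fun q _ => by rw [G2_strategy hf2 hg2]
    have hT2eq : (∑ q : Pv2 M, if PevT2 M q then G2 σ' t (mkT (comT ω0) (pv1T ω0) q) else 0) = (∑ q : Pv2 M, if PevT2 M q then G2 σ t (mkT (comT ω0) (pv1T ω0) q) else 0) :=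
      Finset.sum_congr rfl fun q _ => by rw [G2_strategy hf2 hg2]
    unfold cpr
    have e3' : pr σ' γ' IS.infoCp (fun ω =>
          (pre (t+1) (X2v ω) = ξ2 ∧ pre t (U2v ω) = υ2) ∧
          (IS.infoC t ω = c ∧ IS.infoD t ω = d))
        = ((∑ ξ : Com M, if teamCom t (mkT ξ (pv1T ω0) (pv2T ω0)) = teamCom t ω0
          then G0 γ' IS.infoCp t (mkT ξ (pv1T ω0) (pv2T ω0)) else 0) * ((∑ p : Pv1 M, if PevT1 M p then G1 σ' t (mkT (comT ω0) p (pv2T ω0)) else 0) * (∑ q : Pv2 M, if Pev2 M t ξ2 υ2 q then G2 σ' t (mkT (comT ω0) (pv1T ω0) q) else 0))) / cst := by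
      rw [eq_div_iff hcstne, mul_comm]
      exact hPR2 σ' γ'
    have e3 : pr σ γ IS.infoCp (fun ω =>
          (pre (t+1) (X2v ω) = ξ2 ∧ pre t (U2v ω) = υ2) ∧
          (IS.infoC t ω = c ∧ IS.infoD t ω = d))
        = ((∑ ξ : Com M, if teamCom t (mkT ξ (pv1T ω0) (pv2T ω0)) = teamCom t ω0
          then G0 γ IS.infoCp t (mkT ξ (pv1T ω0) (pv2T ω0)) else 0) * ((∑ p : Pv1 M, if PevT1 M p then G1 σ t (mkT (comT ω0) p (pv2T ω0)) else 0) * (∑ q : Pv2 M, if Pev2 M t ξ2 υ2 q then G2 σ t (mkT (comT ω0) (pv1T ω0) q) else 0))) / cst := by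
      rw [eq_div_iff hcstne, mul_comm]
      exact hPR2 σ γ
    have hprE' : pr σ' γ' IS.infoCp (fun ω => IS.infoC t ω = c ∧ IS.infoD t ω = d)
        = ((∑ ξ : Com M, if teamCom t (mkT ξ (pv1T ω0) (pv2T ω0)) = teamCom t ω0
          then G0 γ' IS.infoCp t (mkT ξ (pv1T ω0) (pv2T ω0)) else 0) * ((∑ p : Pv1 M, if PevT1 M p then G1 σ' t (mkT (comT ω0) p (pv2T ω0)) else 0) * (∑ q : Pv2 M, if PevT2 M q then G2 σ' t (mkT (comT ω0) (pv1T ω0) q) else 0))) / cst := by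
      rw [eq_div_iff hcstne, mul_comm]
      exact hPRE σ' γ'
    rw [e3', e3, hprE, hprE', hS2eq, hT2eq]
    rw [hT2eq] at hT2'
    field_simp

end TA
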